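/- arXiv:1811.06411 — 6 statements merged into one kernel-verified Lean document; each statement's English description precedes it below -/
import Mathlib

section
/- Let G be a graph, k a natural number, and A, B ⊆ V(G). If A and B cannot be separated by fewer than k vertices (i.e., every vertex set S with A∖S and B∖S in different components of G−S has |S| ≥ k), then G contains k pairwise vertex-disjoint A–B paths. -/
open Set

variable {V : Type*}

/-- `S` separates `A` from `B` in `G`: every walk from a vertex of `A` to a vertex
of `B` meets `S` (equivalently, `A∖S` and `B∖S` lie in different components of `G−S`). -/
def SeparatesSets (G : SimpleGraph V) (A B S : Set V) : Prop :=
  ∀ a ∈ A, ∀ b ∈ B, ∀ p : G.Walk a b, ∃ v ∈ p.support, v ∈ S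

namespace MengerAux

open Classical Finset

noncomputable section

/-- Arcs of the "split" digraph on `V × Bool`. -/
abbrev Arc (V : Type*) := (V × Bool) × (V × Bool)

variable (G : SimpleGraph V) (A B : Set V)

/-- Arcs: internal `(v,false) → (v,true)` and external `(u,true) → (v,false)` for `u ~ v`. -/
def Darc (e : Arc V) : Prop :=
  (e.1.2 = false ∧ e.2 = (e.1.1, true)) ∨ (e.1.2 = true ∧ e.2.2 = false ∧ G.Adj e.1.1 e.2.1)

/-- The internal arc of a vertex. -/
def inter (v : V) : Arc V := ((v, false), (v, true))

lemma Darc.ne {e : Arc V} (h : Darc G e) : e.1 ≠ e.2 := by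
  rcases h with ⟨h1, h2⟩ | ⟨h1, h2, h3⟩
  · intro he; rw [he, h2] at h1; simp at h1
  · intro he; rw [he] at h3; exact G.loopless.irrefl _ h3

/-- Excess (out-degree minus in-degree) of a vertex w.r.t. a finite arc set. -/
def excess (F : Finset (Arc V)) (x : V × Bool) : ℤ :=
  ((F.filter fun e => e.1 = x).card : ℤ) - ((F.filter fun e => e.2 = x).card : ℤ)

lemma excess_empty (x : V × Bool) : excess (∅ : Finset (Arc V)) x = 0 := by
  simp [excess]

lemma excess_insert {F : Finset (Arc V)} {e : Arc V} (he : e ∉ F) (z : V × Bool) :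
    excess (insert e F) z
      = excess F z + (if e.1 = z then 1 else 0) - (if e.2 = z then 1 else 0) := by
  unfold excess
  rw [Finset.filter_insert, Finset.filter_insert]
  have hc1 : e ∉ F.filter fun e => e.1 = z := fun q => he (Finset.mem_filter.mp q).1
  have hc2 : e ∉ F.filter fun e => e.2 = z := fun q => he (Finset.mem_filter.mp q).1
  by_cases h1 : e.1 = z <;> by_cases h2 : e.2 = z <;>
    simp only [h1, h2, if_true, if_false, if_pos, if_neg, not_false_iff,
      Finset.card_insert_of_notMem hc1, Finset.card_insert_of_notMem hc2] <;>
    push_cast <;> ring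

lemma excess_erase {F : Finset (Arc V)} {e : Arc V} (he : e ∈ F) (z : V × Bool) :
    excess (F.erase e) z
      = excess F z - (if e.1 = z then 1 else 0) + (if e.2 = z then 1 else 0) := by
  have h : F = insert e (F.erase e) := by
    rw [Finset.insert_erase he]
  have h2 := excess_insert (F := F.erase e) (e := e) (Finset.notMem_erase _ _) z
  rw [← h] at h2
  rw [h2]; ring

lemma out_filter_subset {F : Finset (Arc V)} (hF : ∀ e ∈ F, Darc G e) (a : V) :
    (F.filter fun e => e.1 = (a, false)) ⊆ {inter a} := by
  intro e he
  obtain ⟨heF, he1⟩ := Finset.mem_filter.mp he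
  rcases hF e heF with ⟨h1, h2⟩ | ⟨h1, h2, h3⟩
  · simp only [Finset.mem_singleton, inter]
    rw [← he1, ← Prod.mk.eta (p := e), h2, he1]
  · rw [he1] at h1; simp at h1

lemma in_filter_subset {F : Finset (Arc V)} (hF : ∀ e ∈ F, Darc G e) (b : V) :
    (F.filter fun e => e.2 = (b, true)) ⊆ {inter b} := by
  intro e he
  obtain ⟨heF, he2⟩ := Finset.mem_filter.mp he
  rcases hF e heF with ⟨h1, h2⟩ | ⟨h1, h2, h3⟩
  · have hb : e.1.1 = b := by rw [h2] at he2; exact (Prod.mk.injEq _ _ _ _ ▸ he2).1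
    simp only [Finset.mem_singleton, inter]
    rw [← Prod.mk.eta (p := e), h2, hb, ← hb, ← h1, Prod.mk.eta]
  · rw [he2] at h2; simp at h2

lemma excess_in_le_one {F : Finset (Arc V)} (hF : ∀ e ∈ F, Darc G e) (a : V) :
    excess F (a, false) ≤ 1 := by
  unfold excess
  have h1 : (F.filter fun e => e.1 = (a, false)).card ≤ 1 := by
    calc (F.filter fun e => e.1 = (a, false)).card ≤ ({inter a} : Finset (Arc V)).card :=
          Finset.card_le_card (out_filter_subset G hF a)
      _ = 1 := Finset.card_singleton _
  have h2 : (0:ℤ) ≤ ((F.filter fun e => e.2 = (a, false)).card : ℤ) := Int.ofNat_nonneg _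
  omega

lemma excess_out_ge_neg_one {F : Finset (Arc V)} (hF : ∀ e ∈ F, Darc G e) (b : V) :
    -1 ≤ excess F (b, true) := by
  unfold excess
  have h1 : (F.filter fun e => e.2 = (b, true)).card ≤ 1 := by
    calc (F.filter fun e => e.2 = (b, true)).card ≤ ({inter b} : Finset (Arc V)).card :=
          Finset.card_le_card (in_filter_subset G hF b)
      _ = 1 := Finset.card_singleton _
  have h2 : (0:ℤ) ≤ ((F.filter fun e => e.1 = (b, true)).card : ℤ) := Int.ofNat_nonneg _
  omega

/-- Vertices touched by `F`. -/
def Tf (F : Finset (Arc V)) : Finset (V × Bool) := F.image Prod.fst ∪ F.image Prod.snd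

lemma mem_Tf_of_excess_ne_zero {F : Finset (Arc V)} {x : V × Bool} (h : excess F x ≠ 0) :
    x ∈ Tf F := by
  by_contra hx
  apply h
  unfold excess
  have h1 : F.filter (fun e => e.1 = x) = ∅ := by
    rw [Finset.filter_eq_empty_iff]
    intro e he h1
    exact hx (Finset.mem_union_left _ (Finset.mem_image.mpr ⟨e, he, h1⟩))
  have h2 : F.filter (fun e => e.2 = x) = ∅ := by
    rw [Finset.filter_eq_empty_iff]
    intro e he h2
    exact hx (Finset.mem_union_right _ (Finset.mem_image.mpr ⟨e, he, h2⟩))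
  rw [h1, h2]; simp

/-- A (multi-source, multi-sink, unit) flow from `A`-in-vertices to `B`-out-vertices. -/
def IsFlow (F : Finset (Arc V)) : Prop :=
  (∀ e ∈ F, Darc G e) ∧
  ∀ x : V × Bool, excess F x = 0 ∨ (excess F x = 1 ∧ x.2 = false ∧ x.1 ∈ A)
    ∨ (excess F x = -1 ∧ x.2 = true ∧ x.1 ∈ B)

def val (F : Finset (Arc V)) : ℕ := Set.ncard {x : V × Bool | excess F x = 1}

lemma val_finite (F : Finset (Arc V)) : {x : V × Bool | excess F x = 1}.Finite := by
  apply Set.Finite.subset (Tf F).finite_toSet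
  intro x hx
  exact mem_Tf_of_excess_ne_zero (by rw [Set.mem_setOf_eq.mp hx]; omega)

lemma neg_finite (F : Finset (Arc V)) : {x : V × Bool | excess F x = -1}.Finite := by
  apply Set.Finite.subset (Tf F).finite_toSet
  intro x hx
  exact mem_Tf_of_excess_ne_zero (by rw [Set.mem_setOf_eq.mp hx]; omega)

/-- Extract a trail (giving a `G`-walk) from a positive-excess vertex, ending at a
negative-excess vertex, removing its arcs from `F`. -/
lemma extract : ∀ (n : ℕ) (F : Finset (Arc V)), F.card ≤ n → (∀ e ∈ F, Darc G e) →
    ∀ x : V × Bool, 1 ≤ excess F x →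
    ∃ (y : V × Bool) (F' : Finset (Arc V)) (w : G.Walk x.1 y.1),
      F' ⊆ F ∧
      (∀ z, excess F' z = excess F z - (if z = x then 1 else 0) + (if z = y then 1 else 0)) ∧
      excess F y ≤ -1 ∧
      (∀ v ∈ w.support, inter v ∈ F \ F' ∨ (v = x.1 ∧ x.2 = true) ∨ (v = y.1 ∧ y.2 = false)) := by
  intro n
  induction n with
  | zero =>
    intro F hcard _ x hx
    rw [Finset.card_eq_zero.mp (Nat.le_zero.mp hcard), excess_empty] at hx
    omega
  | succ n ih =>
    intro F hcard hD x hx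
    have hne : (F.filter fun e => e.1 = x).Nonempty := by
      by_contra h
      rw [Finset.not_nonempty_iff_eq_empty] at h
      unfold excess at hx
      rw [h] at hx
      simp only [Finset.card_empty, Nat.cast_zero, zero_sub] at hx
      have : (0:ℤ) ≤ ((F.filter fun e => e.2 = x).card : ℤ) := Int.ofNat_nonneg _
      omega
    obtain ⟨e, he⟩ := hne
    have heF : e ∈ F := (Finset.mem_filter.mp he).1
    have he1 : e.1 = x := (Finset.mem_filter.mp he).2
    have hD_e := hD e heF
    have hxy₀ : x ≠ e.2 := he1 ▸ hD_e.ne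
    set F₂ := F.erase e with hF₂def
    have hF₂card : F₂.card ≤ n := by
      have h1 : F₂.card < F.card := Finset.card_erase_lt_of_mem heF
      omega
    have hF₂sub : F₂ ⊆ F := Finset.erase_subset _ _
    have hD₂ : ∀ e' ∈ F₂, Darc G e' := fun e' h' => hD e' (hF₂sub h')
    have heF₂ : e ∉ F₂ := Finset.notMem_erase _ _
    have hex₂ : ∀ z, excess F₂ z
        = excess F z - (if z = x then 1 else 0) + (if z = e.2 then 1 else 0) := by
      intro z
      rw [hF₂def, excess_erase heF z, he1,
        if_congr (Iff.intro Eq.symm Eq.symm) rfl rfl,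
        show (if e.2 = z then (1:ℤ) else 0) = (if z = e.2 then 1 else 0) from
          if_congr (Iff.intro Eq.symm Eq.symm) rfl rfl]
    by_cases hstop : excess F e.2 ≤ -1
    · -- stop here
      refine ⟨e.2, F₂, ?_⟩
      have hmem : e ∈ F \ F₂ := Finset.mem_sdiff.mpr ⟨heF, heF₂⟩
      rcases hD_e with ⟨h1, h2⟩ | ⟨h1, h2, h3⟩
      · -- internal arc
        have hx2 : x.2 = false := he1 ▸ h1
        have hxeq : x = (x.1, false) := by rw [← hx2, Prod.mk.eta]
        have h21 : e.2.1 = x.1 := by rw [h2, ← he1]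
        have hinter : inter x.1 = e := by
          unfold inter
          rw [← Prod.mk.eta (p := e), h2, he1, ← hxeq]
        refine ⟨(SimpleGraph.Walk.nil : G.Walk x.1 x.1).copy rfl h21.symm, hF₂sub, hex₂, hstop, ?_⟩
        intro v hv
        rw [SimpleGraph.Walk.support_copy, SimpleGraph.Walk.support_nil] at hv
        simp only [List.mem_singleton] at hv
        subst hv
        exact Or.inl (hinter ▸ hmem)
      · -- external arc
        have h3' : G.Adj x.1 e.2.1 := he1 ▸ h3
        refine ⟨SimpleGraph.Walk.cons h3' SimpleGraph.Walk.nil, hF₂sub, hex₂, hstop, ?_⟩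
        intro v hv
        rw [SimpleGraph.Walk.support_cons, SimpleGraph.Walk.support_nil] at hv
        rcases List.mem_cons.mp hv with hv | hv
        · exact Or.inr (Or.inl ⟨hv, he1 ▸ h1⟩)
        · simp only [List.mem_singleton] at hv
          exact Or.inr (Or.inr ⟨hv, h2⟩)
    · -- continue from e.2
      push_neg at hstop
      have hy₀pos : 1 ≤ excess F₂ e.2 := by
        rw [hex₂ e.2]
        rw [if_neg (Ne.symm hxy₀), if_pos rfl]
        omega
      obtain ⟨y, F', w', hsub', hex', hyneg', hsupp'⟩ := ih F₂ hF₂card hD₂ e.2 hy₀pos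
      have hyne₂ : y ≠ e.2 := fun h => by rw [h] at hyneg'; omega
      have hynex : y ≠ x := by
        intro h
        rw [h, hex₂ x, if_pos rfl] at hyneg'
        rw [if_neg (hxy₀)] at hyneg'
        omega
      have hyF : excess F y ≤ -1 := by
        have := hex₂ y
        rw [if_neg hynex, if_neg hyne₂] at this
        omega
      have hform : ∀ z, excess F' z
          = excess F z - (if z = x then 1 else 0) + (if z = y then 1 else 0) := by
        intro z
        rw [hex' z, hex₂ z]
        ring
      have hFsub : F' ⊆ F := hsub'.trans hF₂sub
      have hmem : e ∈ F \ F' := Finset.mem_sdiff.mpr ⟨heF, fun h => heF₂ (hsub' h)⟩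
      have hsdiffmono : ∀ g, g ∈ F₂ \ F' → g ∈ F \ F' := by
        intro g hg
        obtain ⟨h1, h2⟩ := Finset.mem_sdiff.mp hg
        exact Finset.mem_sdiff.mpr ⟨hF₂sub h1, h2⟩
      rcases hD_e with ⟨h1, h2⟩ | ⟨h1, h2, h3⟩
      · -- internal arc: e.2.1 = x.1
        have h21 : e.2.1 = x.1 := by rw [h2, ← he1]
        have hxeq : x = (x.1, false) := by
          rw [← he1, ← h1, Prod.mk.eta]
        have hinter : inter x.1 = e := by
          unfold inter
          rw [← Prod.mk.eta (p := e), he1, h2, he1, ← hxeq]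
        refine ⟨y, F', w'.copy h21 rfl, hFsub, hform, hyF, ?_⟩
        intro v hv
        rw [SimpleGraph.Walk.support_copy] at hv
        rcases hsupp' v hv with h | ⟨hva, hvb⟩ | h
        · exact Or.inl (hsdiffmono _ h)
        · -- v = e.2.1 = x.1 and e.2.2 = true: internal arc of x.1 is e itself
          exact Or.inl (by rw [hva, h21, hinter]; exact hmem)
        · exact Or.inr (Or.inr h)
      · -- external arc
        have h3' : G.Adj x.1 e.2.1 := he1 ▸ h3
        refine ⟨y, F', SimpleGraph.Walk.cons h3' w', hFsub, hform, hyF, ?_⟩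
        intro v hv
        rw [SimpleGraph.Walk.support_cons] at hv
        rcases List.mem_cons.mp hv with hv | hv
        · exact Or.inr (Or.inl ⟨hv, he1 ▸ h1⟩)
        · rcases hsupp' v hv with h | ⟨hva, hvb⟩ | h
          · exact Or.inl (hsdiffmono _ h)
          · rw [h2] at hvb; simp at hvb
          · exact Or.inr (Or.inr h)

/-- Decompose a flow of value `n` into `n` walks with pairwise disjoint arc sets,
each walk carrying the internal arcs of all its support vertices. -/
lemma decomp : ∀ (n : ℕ) (F : Finset (Arc V)), IsFlow G A B F → val F = n →
    ∃ (P : Fin n → Σ (a : V) (b : V), G.Walk a b) (E : Fin n → Finset (Arc V)),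
      (∀ i, (P i).1 ∈ A) ∧ (∀ i, (P i).2.1 ∈ B) ∧ (∀ i, E i ⊆ F) ∧
      (∀ i j, i ≠ j → Disjoint (E i) (E j)) ∧
      (∀ i, ∀ v ∈ (P i).2.2.support, inter v ∈ E i) := by
  intro n
  induction n with
  | zero =>
    intro F _ _
    exact ⟨fun i => i.elim0, fun i => i.elim0, fun i => i.elim0, fun i => i.elim0,
      fun i => i.elim0, fun i j h => i.elim0, fun i => i.elim0⟩
  | succ n ih =>
    intro F hF hval
    have hne : {x : V × Bool | excess F x = 1}.Nonempty := by
      rw [Set.nonempty_iff_ne_empty]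
      intro h
      rw [val, h] at hval
      simp at hval
    obtain ⟨x, hx⟩ := hne
    rw [Set.mem_setOf_eq] at hx
    have hxprop : x.2 = false ∧ x.1 ∈ A := by
      rcases hF.2 x with h | ⟨_, h⟩ | ⟨h, _⟩ <;> [omega; exact h; omega]
    obtain ⟨y, F', w, hsub, hex, hyneg, hsupp⟩ :=
      extract G F.card F le_rfl hF.1 x (by omega)
    have hyprop : y.2 = true ∧ y.1 ∈ B ∧ excess F y = -1 := by
      rcases hF.2 y with h | ⟨h, _⟩ | ⟨h, h2⟩ <;> [omega; omega; exact ⟨h2.1, h2.2, h⟩]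
    have hxy : x ≠ y := by
      intro h; rw [h] at hx; omega
    have hF' : IsFlow G A B F' := by
      refine ⟨fun e he => hF.1 e (hsub he), fun z => ?_⟩
      by_cases hzx : z = x
      · subst hzx
        left
        rw [hex z, if_pos rfl, if_neg hxy]
        omega
      · by_cases hzy : z = y
        · subst hzy
          left
          rw [hex z, if_neg hzx, if_pos rfl]
          omega
        · have h := hex z
          rw [if_neg hzx, if_neg hzy] at h
          rcases hF.2 z with h0 | h1 | h2
          · left; omega
          · right; left; exact ⟨by omega, h1.2⟩
          · right; right; exact ⟨by omega, h2.2⟩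
    have hval' : val F' = n := by
      have hsetEq : {z : V × Bool | excess F' z = 1} = {z : V × Bool | excess F z = 1} \ {x} := by
        ext z
        simp only [Set.mem_setOf_eq, Set.mem_diff, Set.mem_singleton_iff]
        by_cases hzx : z = x
        · subst hzx
          rw [hex z, if_pos rfl, if_neg hxy]
          constructor
          · intro h; omega
          · rintro ⟨_, h⟩; exact absurd rfl h
        · by_cases hzy : z = y
          · subst hzy
            rw [hex z, if_neg hzx, if_pos rfl]
            constructor
            · intro h; omega
            · rintro ⟨h, _⟩; omega
          · have h := hex z
            rw [if_neg hzx, if_neg hzy] at h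
            constructor
            · intro hh; exact ⟨by omega, hzx⟩
            · rintro ⟨hh, _⟩; omega
      have hxmem : x ∈ {z : V × Bool | excess F z = 1} := hx
      rw [val, hsetEq, Set.ncard_diff_singleton_of_mem hxmem]
      rw [val] at hval
      omega
    obtain ⟨P', E', hA', hB', hEsub', hEdisj', hEsupp'⟩ := ih F' hF' hval'
    refine ⟨Fin.cons ⟨x.1, y.1, w⟩ P', Fin.cons (F \ F') E', ?_, ?_, ?_, ?_, ?_⟩
    · intro i
      induction i using Fin.cases with
      | zero => simpa using hxprop.2
      | succ i => simpa using hA' i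
    · intro i
      induction i using Fin.cases with
      | zero => exact hyprop.2.1
      | succ i => exact hB' i
    · intro i
      induction i using Fin.cases with
      | zero => simpa using Finset.sdiff_subset
      | succ i => simpa using (hEsub' i).trans hsub
    · intro i j hij
      induction i using Fin.cases with
      | zero =>
        induction j using Fin.cases with
        | zero => exact absurd rfl hij
        | succ j =>
          simp only [Fin.cons_zero, Fin.cons_succ]
          exact Finset.sdiff_disjoint.mono_right (hEsub' j)
      | succ i =>
        induction j using Fin.cases with
        | zero =>
          simp only [Fin.cons_zero, Fin.cons_succ]
          exact (Finset.sdiff_disjoint.mono_right (hEsub' i)).symm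
        | succ j =>
          simp only [Fin.cons_succ]
          exact hEdisj' i j (fun h => hij (by rw [h]))
    · intro i
      induction i using Fin.cases with
      | zero =>
        simp only [Fin.cons_zero, Fin.cons_succ]
        intro v hv
        rcases hsupp v hv with h | ⟨_, h⟩ | ⟨_, h⟩
        · exact h
        · rw [hxprop.1] at h; simp at h
        · rw [hyprop.1] at h; simp at h
      | succ i =>
        simp only [Fin.cons_succ]
        exact hEsupp' i

/-- Residual relation of a flow. -/
def resid (F : Finset (Arc V)) (p q : V × Bool) : Prop :=
  (Darc G (p, q) ∧ (p, q) ∉ F) ∨ (q, p) ∈ F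

/-- From reflexive-transitive reachability, get a duplicate-free chain. -/
lemma exists_nodup_chain {α : Type*} {r : α → α → Prop} {a b : α}
    (h : Relation.ReflTransGen r a b) :
    ∃ l, List.Chain r a l ∧ (a :: l).getLast? = some b ∧ (a :: l).Nodup := by
  induction h using Relation.ReflTransGen.head_induction_on with
  | refl => exact ⟨[], List.Chain.nil, rfl, List.nodup_singleton b⟩
  | @head a c hac hcb ih =>
    obtain ⟨l, hc, hlast, hnd⟩ := ih
    by_cases ha : a ∈ c :: l
    · obtain ⟨m₁, m₂, heq⟩ := List.append_of_mem ha
      refine ⟨m₂, ?_, ?_, ?_⟩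
      · have : List.Chain' r (m₁ ++ a :: m₂) := heq ▸ hc
        exact this.suffix (List.suffix_append m₁ (a :: m₂))
      · rw [heq] at hlast
        rw [← List.getLast?_append_of_ne_nil m₁ (l₂ := a :: m₂) (List.cons_ne_nil _ _)]
        exact hlast
      · exact ((List.suffix_append m₁ (a :: m₂)).sublist.nodup (heq ▸ hnd))
    · exact ⟨c :: l, List.Chain.cons hac hc, by rw [List.getLast?_cons_cons]; exact hlast,
        List.Nodup.cons ha hnd⟩

lemma chain_transfer {α : Type*} {r r' : α → α → Prop} :
    ∀ (l : List α) (c : α), List.Chain r c l →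
      (∀ p q, p ∈ c :: l → q ∈ l → r p q → r' p q) → List.Chain r' c l := by
  intro l
  induction l with
  | nil => intro c _ _; exact List.Chain.nil
  | cons d l ih =>
    intro c hc hpq
    obtain ⟨hcd, hdl⟩ := List.chain_cons.mp hc
    refine List.Chain.cons (hpq c d (by simp) (by simp) hcd) (ih d hdl ?_)
    intro p q hp hq hr
    exact hpq p q (by simp at hp ⊢; tauto) (by simp [hq]) hr

/-- Augment a flow along a duplicate-free residual chain. -/
lemma aug : ∀ (l : List (V × Bool)) (x b : V × Bool) (F : Finset (Arc V)),
    (∀ e ∈ F, Darc G e) → List.Chain (resid G F) x l → (x :: l).getLast? = some b →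
    (x :: l).Nodup →
    ∃ F' : Finset (Arc V), (∀ e ∈ F', Darc G e) ∧
      ∀ z, excess F' z = excess F z + (if z = x then 1 else 0) - (if z = b then 1 else 0) := by
  intro l
  induction l with
  | nil =>
    intro x b F hD _ hlast _
    have hbx : b = x := by simpa using hlast.symm
    subst hbx
    exact ⟨F, hD, fun z => by by_cases h : z = b <;> simp [h]⟩
  | cons y l ih =>
    intro x b F hD hchain hlast hnd
    obtain ⟨hxy, hyl⟩ := List.chain_cons.mp hchain
    have hxl : x ∉ y :: l := by
      have := List.nodup_cons.mp hnd
      exact this.1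
    have hxny : x ≠ y := fun h => hxl (h ▸ List.mem_cons_self)
    -- modify F on the arc (x,y)
    obtain ⟨F₁, hD₁, hex₁, hagree⟩ :
        ∃ F₁ : Finset (Arc V), (∀ e ∈ F₁, Darc G e) ∧
          (∀ z, excess F₁ z = excess F z + (if z = x then 1 else 0) - (if z = y then 1 else 0)) ∧
          (∀ e : Arc V, e ≠ (x, y) → e ≠ (y, x) → (e ∈ F₁ ↔ e ∈ F)) := by
      rcases hxy with ⟨hd, hnotin⟩ | hin
      · refine ⟨insert (x, y) F, ?_, ?_, ?_⟩
        · intro e he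
          rcases Finset.mem_insert.mp he with h | h
          · exact h ▸ hd
          · exact hD e h
        · intro z
          rw [excess_insert hnotin z,
            show (if (x,y).1 = z then (1:ℤ) else 0) = (if z = x then 1 else 0) from
              if_congr ⟨Eq.symm, Eq.symm⟩ rfl rfl,
            show (if (x,y).2 = z then (1:ℤ) else 0) = (if z = y then 1 else 0) from
              if_congr ⟨Eq.symm, Eq.symm⟩ rfl rfl]
        · intro e h1 _
          simp [Finset.mem_insert, h1]
      · refine ⟨F.erase (y, x), fun e he => hD e (Finset.erase_subset _ _ he), ?_, ?_⟩
        · intro z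
          rw [excess_erase hin z,
            show (if (y,x).1 = z then (1:ℤ) else 0) = (if z = y then 1 else 0) from
              if_congr ⟨Eq.symm, Eq.symm⟩ rfl rfl,
            show (if (y,x).2 = z then (1:ℤ) else 0) = (if z = x then 1 else 0) from
              if_congr ⟨Eq.symm, Eq.symm⟩ rfl rfl]
          ring
        · intro e _ h2
          simp [Finset.mem_erase, h2]
    -- the rest of the chain is residual for F₁ as well
    have hchain₁ : List.Chain (resid G F₁) y l := by
      refine chain_transfer l y hyl ?_
      intro p q hp hq hr
      have hpx : p ≠ x := fun h => hxl (h ▸ hp)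
      have hqx : q ≠ x := fun h => hxl (h ▸ List.mem_cons_of_mem _ hq)
      have e1 : (p, q) ≠ (x, y) := fun h => hpx (congrArg Prod.fst h)
      have e2 : (p, q) ≠ (y, x) := fun h => hqx (congrArg Prod.snd h)
      have e3 : (q, p) ≠ (x, y) := fun h => hqx (congrArg Prod.fst h)
      have e4 : (q, p) ≠ (y, x) := fun h => hpx (congrArg Prod.snd h)
      rcases hr with ⟨hd, hni⟩ | hi
      · exact Or.inl ⟨hd, fun h => hni ((hagree _ e1 e2).mp h)⟩
      · exact Or.inr ((hagree _ e3 e4).mpr hi)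
    have hlast₁ : (y :: l).getLast? = some b := by
      rw [List.getLast?_cons_cons] at hlast
      exact hlast
    obtain ⟨F', hD', hex'⟩ := ih y b F₁ hD₁ hchain₁ hlast₁ (List.nodup_cons.mp hnd).2
    refine ⟨F', hD', fun z => ?_⟩
    rw [hex' z, hex₁ z]
    ring

/-- Residual-reachable vertices from unsaturated sources. -/
def Zset (F : Finset (Arc V)) : Set (V × Bool) :=
  {x | ∃ a, a ∈ A ∧ excess F (a, false) = 0 ∧ Relation.ReflTransGen (resid G F) (a, false) x}

lemma Zset_closed {F : Finset (Arc V)} {x y : V × Bool}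
    (hx : x ∈ Zset G A F) (h : resid G F x y) : y ∈ Zset G A F :=
  let ⟨a, ha, he, hr⟩ := hx; ⟨a, ha, he, hr.tail h⟩

lemma val_eq_card (F : Finset (Arc V)) :
    val F = ((Tf F).filter fun z => excess F z = 1).card := by
  rw [val, show {x : V × Bool | excess F x = 1} = ↑((Tf F).filter fun z => excess F z = 1) by
    ext z
    simp only [Set.mem_setOf_eq, Finset.coe_filter, Set.mem_setOf_eq]
    exact ⟨fun h => ⟨mem_Tf_of_excess_ne_zero (by omega), h⟩, fun h => h.2⟩]
  exact Set.ncard_coe_finset _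

/-- Main alternative: as long as the value is less than `k`, we can augment. -/
lemma key (k : ℕ) (hsep : ∀ S : Finset V, SeparatesSets G A B ↑S → k ≤ S.card)
    (F : Finset (Arc V)) (hF : IsFlow G A B F) (hval : val F < k) :
    ∃ F', IsFlow G A B F' ∧ val F' = val F + 1 := by
  by_cases hcase : ∃ b, b ∈ B ∧ excess F (b, true) = 0 ∧ (b, true) ∈ Zset G A F
  · -- augment along a residual path
    obtain ⟨b, hbB, hb0, a, haA, ha0, hreach⟩ := hcase
    obtain ⟨l, hchain, hlast, hnd⟩ := exists_nodup_chain hreach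
    obtain ⟨F', hD', hex'⟩ := aug G l (a, false) (b, true) F hF.1 hchain hlast hnd
    have hab : ((a, false) : V × Bool) ≠ (b, true) := by simp
    refine ⟨F', ⟨hD', ?_⟩, ?_⟩
    · intro z
      have h := hex' z
      by_cases hza : z = (a, false)
      · subst hza
        rw [if_pos rfl, if_neg hab] at h
        right; left
        exact ⟨by omega, rfl, haA⟩
      · by_cases hzb : z = (b, true)
        · subst hzb
          rw [if_neg hab.symm, if_pos rfl] at h
          right; right
          exact ⟨by omega, rfl, hbB⟩
        · rw [if_neg hza, if_neg hzb] at h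
          rcases hF.2 z with h0 | h1 | h2
          · left; omega
          · right; left; exact ⟨by omega, h1.2⟩
          · right; right; exact ⟨by omega, h2.2⟩
    · have hins : {z : V × Bool | excess F' z = 1}
          = insert ((a, false) : V × Bool) {z : V × Bool | excess F z = 1} := by
        ext z
        simp only [Set.mem_setOf_eq, Set.mem_insert_iff]
        have h := hex' z
        by_cases hza : z = (a, false)
        · subst hza
          rw [if_pos rfl, if_neg hab] at h
          constructor
          · intro _; exact Or.inl rfl
          · intro _; omega
        · by_cases hzb : z = (b, true)
          · subst hzb
            rw [if_neg hab.symm, if_pos rfl] at h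
            constructor
            · intro hh; omega
            · rintro (hh | hh)
              · exact absurd hh.symm hab
              · omega
          · rw [if_neg hza, if_neg hzb] at h
            constructor
            · intro hh; exact Or.inr (by omega)
            · rintro (hh | hh)
              · exact absurd hh hza
              · omega
      have hnotmem : ((a, false) : V × Bool) ∉ {z : V × Bool | excess F z = 1} := by
        rw [Set.mem_setOf_eq, ha0]; omega
      rw [val, hins, Set.ncard_insert_of_notMem hnotmem (val_finite F), val]
  · -- build a separator of size < k : contradiction
    exfalso
    push_neg at hcase
    set Z := Zset G A F with hZdef
    set Zf := (Tf F).filter (fun z => z ∈ Z) with hZf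
    set Cr := F.filter (fun e => e.1 ∈ Z ∧ e.2 ∉ Z) with hCr
    set S2 := ((Tf F).filter fun z => excess F z = 1).filter (fun z => z ∉ Z) with hS2
    set S3 := Zf.filter (fun z => excess F z = -1) with hS3
    set Sfin : Finset V := Cr.image (fun e => e.1.1) ∪ S2.image Prod.fst ∪ S3.image Prod.fst
      with hSfin
    -- Sfin separates A from B
    have hsepS : SeparatesSets G A B ↑Sfin := by
      intro a haA b hbB p
      have hlift : ∀ (u w : V) (q : G.Walk u w), (u, false) ∈ Z →
          (∃ v ∈ q.support, v ∈ (↑Sfin : Set V)) ∨ (w, true) ∈ Z := by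
        intro u w q
        induction q with
        | nil =>
          rename_i u
          intro hu
          by_cases hut : (u, true) ∈ Z
          · exact Or.inr hut
          · by_cases hint : inter u ∈ F
            · refine Or.inl ⟨u, by simp, ?_⟩
              have : inter u ∈ Cr := Finset.mem_filter.mpr ⟨hint, hu, hut⟩
              simp only [hSfin, Finset.coe_union, Set.mem_union, Finset.mem_coe]
              exact Or.inl (Or.inl (Finset.mem_image.mpr ⟨inter u, this, rfl⟩))
            · exact absurd (Zset_closed G A hu (Or.inl ⟨Or.inl ⟨rfl, rfl⟩, hint⟩)) hut
        | cons hadj q ih =>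
          rename_i u u' w
          intro hu
          by_cases hut : (u, true) ∈ Z
          · by_cases hu' : (u', false) ∈ Z
            · rcases ih hu' with ⟨v, hv, hvS⟩ | h
              · exact Or.inl ⟨v, List.mem_cons_of_mem _ hv, hvS⟩
              · exact Or.inr h
            · -- external arc from (u,true) to (u',false) must be in F : crossing
              have hdarc : Darc G ((u, true), (u', false)) := Or.inr ⟨rfl, rfl, hadj⟩
              by_cases hmem : ((u, true), (u', false)) ∈ F
              · refine Or.inl ⟨u, by simp, ?_⟩
                have : ((u, true), (u', false)) ∈ Cr := Finset.mem_filter.mpr ⟨hmem, hut, hu'⟩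
                simp only [hSfin, Finset.coe_union, Set.mem_union, Finset.mem_coe]
                exact Or.inl (Or.inl (Finset.mem_image.mpr ⟨_, this, rfl⟩))
              · exact absurd (Zset_closed G A hut (Or.inl ⟨hdarc, hmem⟩)) hu'
          · by_cases hint : inter u ∈ F
            · refine Or.inl ⟨u, by simp, ?_⟩
              have : inter u ∈ Cr := Finset.mem_filter.mpr ⟨hint, hu, hut⟩
              simp only [hSfin, Finset.coe_union, Set.mem_union, Finset.mem_coe]
              exact Or.inl (Or.inl (Finset.mem_image.mpr ⟨inter u, this, rfl⟩))
            · exact absurd (Zset_closed G A hu (Or.inl ⟨Or.inl ⟨rfl, rfl⟩, hint⟩)) hut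
      by_cases haZ : (a, false) ∈ Z
      · rcases hlift a b p haZ with h | h
        · exact h
        · -- b is a saturated sink in Z
          have hexb : excess F (b, true) = -1 := by
            rcases hF.2 (b, true) with h0 | h1 | h2
            · exact absurd h (hcase b hbB h0)
            · simp at h1
            · exact h2.1
          refine ⟨b, p.end_mem_support, ?_⟩
          have hmem : ((b, true) : V × Bool) ∈ S3 :=
            Finset.mem_filter.mpr ⟨Finset.mem_filter.mpr
              ⟨mem_Tf_of_excess_ne_zero (by omega), h⟩, hexb⟩
          simp only [hSfin, Finset.coe_union, Set.mem_union, Finset.mem_coe]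
          exact Or.inr (Finset.mem_image.mpr ⟨_, hmem, rfl⟩)
      · -- a is a saturated source not in Z
        have hexa : excess F (a, false) = 1 := by
          rcases hF.2 (a, false) with h0 | h1 | h2
          · exact absurd (⟨a, haA, h0, Relation.ReflTransGen.refl⟩ : (a, false) ∈ Z) haZ
          · exact h1.1
          · simp at h2
        refine ⟨a, p.start_mem_support, ?_⟩
        have hmem : ((a, false) : V × Bool) ∈ S2 :=
          Finset.mem_filter.mpr ⟨Finset.mem_filter.mpr
            ⟨mem_Tf_of_excess_ne_zero (by omega), hexa⟩, haZ⟩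
        simp only [hSfin, Finset.coe_union, Set.mem_union, Finset.mem_coe]
        exact Or.inl (Or.inr (Finset.mem_image.mpr ⟨_, hmem, rfl⟩))
    -- cardinality bound
    set P := (Zf.filter fun z => excess F z = 1).card with hP
    set Q := S3.card with hQ
    -- (d) sum of excesses over Zf
    have hd : ∑ z ∈ Zf, excess F z = (P : ℤ) - (Q : ℤ) := by
      have hptw : ∀ z ∈ Zf, excess F z
          = (if excess F z = 1 then (1:ℤ) else 0) - (if excess F z = -1 then 1 else 0) := by
        intro z _
        rcases hF.2 z with h | ⟨h, _⟩ | ⟨h, _⟩ <;> rw [h] <;> norm_num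
      rw [Finset.sum_congr rfl hptw, Finset.sum_sub_distrib, Finset.sum_boole, Finset.sum_boole]
    -- (e) sum of excesses = number of crossing arcs
    have hout : ∑ z ∈ Zf, ((F.filter fun e => e.1 = z).card : ℤ)
        = ((F.filter fun e => e.1 ∈ Z).card : ℤ) := by
      have h1a : (F.filter fun e => e.1 ∈ Z).card
          = ∑ z ∈ Zf, ((F.filter fun e => e.1 ∈ Z).filter fun e => e.1 = z).card :=
        Finset.card_eq_sum_card_fiberwise (fun e he => by
          obtain ⟨heF, heZ⟩ := Finset.mem_filter.mp he
          exact Finset.mem_filter.mpr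
            ⟨Finset.mem_union_left _ (Finset.mem_image.mpr ⟨e, heF, rfl⟩), heZ⟩)
      rw [h1a]
      push_cast
      refine Finset.sum_congr rfl fun z hz => ?_
      congr 2
      rw [Finset.filter_filter]
      refine Finset.filter_congr fun e heF => ?_
      have hzZ : z ∈ Z := (Finset.mem_filter.mp hz).2
      constructor
      · intro h
        first
        | exact h.2
        | exact ⟨by rw [h]; exact hzZ, h⟩
      · intro h
        first
        | exact h.2
        | exact ⟨by rw [h]; exact hzZ, h⟩
    have hin : ∑ z ∈ Zf, ((F.filter fun e => e.2 = z).card : ℤ)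
        = ((F.filter fun e => e.2 ∈ Z).card : ℤ) := by
      have h1a : (F.filter fun e => e.2 ∈ Z).card
          = ∑ z ∈ Zf, ((F.filter fun e => e.2 ∈ Z).filter fun e => e.2 = z).card :=
        Finset.card_eq_sum_card_fiberwise (f := Prod.snd) (fun e he => by
          obtain ⟨heF, heZ⟩ := Finset.mem_filter.mp he
          exact Finset.mem_filter.mpr
            ⟨Finset.mem_union_right _ (Finset.mem_image.mpr ⟨e, heF, rfl⟩), heZ⟩)
      rw [h1a]
      push_cast
      refine Finset.sum_congr rfl fun z hz => ?_
      congr 2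
      rw [Finset.filter_filter]
      refine Finset.filter_congr fun e heF => ?_
      have hzZ : z ∈ Z := (Finset.mem_filter.mp hz).2
      constructor
      · intro h
        first
        | exact h.2
        | exact ⟨by rw [h]; exact hzZ, h⟩
      · intro h
        first
        | exact h.2
        | exact ⟨by rw [h]; exact hzZ, h⟩
    have hsplit1 : (F.filter fun e => e.1 ∈ Z).card
        = (F.filter fun e => e.1 ∈ Z ∧ e.2 ∈ Z).card + Cr.card := by
      rw [hCr]
      rw [← Finset.filter_filter, ← Finset.filter_filter]
      exact (Finset.card_filter_add_card_filter_not (p := fun e : Arc V => e.2 ∈ Z)).symm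
    have hnocross : (F.filter fun e => ¬ e.1 ∈ Z ∧ e.2 ∈ Z) = ∅ := by
      rw [Finset.filter_eq_empty_iff]
      rintro e heF ⟨h1, h2⟩
      exact h1 (Zset_closed G A h2 (Or.inr (by rw [Prod.mk.eta]; exact heF)))
    have hsplit2 : (F.filter fun e => e.2 ∈ Z).card
        = (F.filter fun e => e.1 ∈ Z ∧ e.2 ∈ Z).card := by
      have h := Finset.card_filter_add_card_filter_not
        (s := F.filter fun e => e.2 ∈ Z) (p := fun e => e.1 ∈ Z)
      rw [Finset.filter_filter, Finset.filter_filter] at h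
      have e1 : (F.filter fun e => e.2 ∈ Z ∧ e.1 ∈ Z) = F.filter fun e => e.1 ∈ Z ∧ e.2 ∈ Z :=
        Finset.filter_congr fun e _ => by tauto
      have e2 : (F.filter fun e => e.2 ∈ Z ∧ ¬ e.1 ∈ Z) = ∅ := by
        rw [← hnocross]
        exact Finset.filter_congr fun e _ => by tauto
      rw [e1, e2] at h
      simpa using h.symm
    have hsum : ∑ z ∈ Zf, excess F z = (Cr.card : ℤ) := by
      have : ∑ z ∈ Zf, excess F z
          = ∑ z ∈ Zf, ((F.filter fun e => e.1 = z).card : ℤ)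
            - ∑ z ∈ Zf, ((F.filter fun e => e.2 = z).card : ℤ) := by
        rw [← Finset.sum_sub_distrib]
        exact Finset.sum_congr rfl fun z _ => rfl
      rw [this, hout, hin, hsplit1, hsplit2]
      push_cast
      ring
    -- (f) P = Cr.card + Q
    have hPQ : P = Cr.card + Q := by
      have := hd.symm.trans hsum
      omega
    -- (b) val F = P + S2.card
    have hvalsplit : val F = P + S2.card := by
      rw [val_eq_card]
      have h := Finset.card_filter_add_card_filter_not
        (s := (Tf F).filter fun z => excess F z = 1) (p := fun z => z ∈ Z)
      rw [← h, ← hS2]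
      congr 1
      rw [hP, hZf]
      rw [Finset.filter_comm]
    -- total bound
    have hbound : Sfin.card ≤ val F := by
      have h1 : Sfin.card ≤ Cr.card + S2.card + S3.card := by
        calc Sfin.card ≤ (Cr.image (fun e => e.1.1) ∪ S2.image Prod.fst).card
              + (S3.image Prod.fst).card := Finset.card_union_le _ _
          _ ≤ (Cr.image (fun e => e.1.1)).card + (S2.image Prod.fst).card
              + (S3.image Prod.fst).card := by
                have := Finset.card_union_le (Cr.image (fun e => e.1.1)) (S2.image Prod.fst)
                omega
          _ ≤ Cr.card + S2.card + S3.card := by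
                have i1 := Finset.card_image_le (s := Cr) (f := fun e => e.1.1)
                have i2 := Finset.card_image_le (s := S2) (f := Prod.fst)
                have i3 := Finset.card_image_le (s := S3) (f := Prod.fst)
                omega
      omega
    have := hsep Sfin hsepS
    omega

lemma exists_flow (k : ℕ) (hsep : ∀ S : Finset V, SeparatesSets G A B ↑S → k ≤ S.card) :
    ∀ m : ℕ, m ≤ k → ∃ F, IsFlow G A B F ∧ val F = m := by
  intro m
  induction m with
  | zero =>
    intro _
    refine ⟨∅, ⟨by simp, fun x => Or.inl (excess_empty x)⟩, ?_⟩
    have h : {x : V × Bool | excess (∅ : Finset (Arc V)) x = 1} = ∅ := by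
      ext x; simp [excess_empty]
    rw [val, h, Set.ncard_empty]
  | succ m ih =>
    intro hm
    obtain ⟨F, hF, hFv⟩ := ih (by omega)
    obtain ⟨F', hF', hFv'⟩ := key G A B k hsep F hF (by omega)
    exact ⟨F', hF', by omega⟩

/-- Trim a walk from `A` to `B` to an `A`–`B` path with no inner vertex in `A ∪ B`. -/
lemma walkTrim (C : Set V) : ∀ {a b : V} (w : G.Walk a b), b ∈ C →
    ∃ (b' : V) (w' : G.Walk a b'), b' ∈ C ∧ (∀ v ∈ w'.support, v ∈ w.support) ∧
      (∀ v ∈ w'.support, v ∈ C → v = b') := by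
  intro a b w
  induction w with
  | nil =>
    intro hb
    refine ⟨_, SimpleGraph.Walk.nil, hb, fun v hv => hv, fun v hv _ => ?_⟩
    simpa using hv
  | cons h p ih =>
    rename_i u u' uw
    intro hb
    by_cases hu : u ∈ C
    · refine ⟨u, SimpleGraph.Walk.nil, hu, ?_, ?_⟩
      · intro v hv
        simp only [SimpleGraph.Walk.support_nil, List.mem_singleton] at hv
        subst hv
        exact SimpleGraph.Walk.start_mem_support _
      · intro v hv _
        simpa using hv
    · obtain ⟨b', w2, hb', hsub, honly⟩ := ih hb
      refine ⟨b', SimpleGraph.Walk.cons h w2, hb', ?_, ?_⟩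
      · intro v hv
        rw [SimpleGraph.Walk.support_cons] at hv ⊢
        rcases List.mem_cons.mp hv with h1 | h1
        · exact h1 ▸ List.mem_cons_self
        · exact List.mem_cons_of_mem _ (hsub v h1)
      · intro v hv hvC
        rw [SimpleGraph.Walk.support_cons] at hv
        rcases List.mem_cons.mp hv with h1 | h1
        · exact absurd (h1 ▸ hvC) hu
        · exact honly v h1 hvC

lemma trim {a b : V} (w : G.Walk a b) (ha : a ∈ A) (hb : b ∈ B) :
    ∃ (a' : V) (b' : V) (w' : G.Walk a' b'), a' ∈ A ∧ b' ∈ B ∧ w'.IsPath ∧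
      (∀ v ∈ w'.support, v ∈ w.support) ∧
      (∀ v ∈ w'.support, v = a' ∨ v = b' ∨ v ∉ A ∪ B) := by
  obtain ⟨b₁, w₁, hb₁, hsub₁, honly₁⟩ := walkTrim G B w hb
  obtain ⟨a₁, w₂r, ha₁, hsub₂, honly₂⟩ := walkTrim G A w₁.reverse ha
  set w₃ := w₂r.reverse.toPath with hw₃
  refine ⟨a₁, b₁, w₃.1, ha₁, hb₁, w₃.2, ?_, ?_⟩
  · intro v hv
    have h1 : v ∈ w₂r.reverse.support := SimpleGraph.Walk.support_toPath_subset _ hv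
    rw [SimpleGraph.Walk.support_reverse] at h1
    have h2 : v ∈ w₁.support := by
      have := hsub₂ v (List.mem_reverse.mp h1)
      rw [SimpleGraph.Walk.support_reverse] at this
      exact List.mem_reverse.mp this
    exact hsub₁ v h2
  · intro v hv
    have h1 : v ∈ w₂r.reverse.support := SimpleGraph.Walk.support_toPath_subset _ hv
    rw [SimpleGraph.Walk.support_reverse] at h1
    have h1' : v ∈ w₂r.support := List.mem_reverse.mp h1
    have h2 : v ∈ w₁.support := by
      have := hsub₂ v h1'
      rw [SimpleGraph.Walk.support_reverse] at this
      exact List.mem_reverse.mp this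
    by_cases hvA : v ∈ A
    · exact Or.inl (honly₂ v h1' hvA)
    · by_cases hvB : v ∈ B
      · exact Or.inr (Or.inl (honly₁ v h2 hvB))
      · exact Or.inr (Or.inr (fun hc => hc.elim hvA hvB))

end
end MengerAux

open MengerAux in
/-- Menger for a finite parameter `k`: if `A` and `B` cannot be separated by fewer
than `k` vertices, then there are `k` pairwise vertex-disjoint `A`–`B` paths
(paths with one end in `A`, the other in `B`, and no inner vertex in `A ∪ B`). -/
theorem menger_finite_parameter (G : SimpleGraph V) (k : ℕ) (A B : Set V)
    (hsep : ∀ S : Finset V, SeparatesSets G A B ↑S → k ≤ S.card) :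
    ∃ (a b : Fin k → V) (p : ∀ i, G.Walk (a i) (b i)),
      (∀ i, a i ∈ A) ∧ (∀ i, b i ∈ B) ∧ (∀ i, (p i).IsPath) ∧
      (∀ i, ∀ v ∈ (p i).support, v = a i ∨ v = b i ∨ v ∉ A ∪ B) ∧
      (∀ i j, i ≠ j → ∀ v, v ∈ (p i).support → v ∈ (p j).support → False) := by
  obtain ⟨F, hF, hFval⟩ := exists_flow G A B k hsep k le_rfl
  obtain ⟨P, E, hA, hB, hEsub, hEdisj, hEsupp⟩ := decomp G A B k F hF hFval
  choose a' b' w' ha' hb' hpath hsub hinner using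
    fun i => trim G A B (P i).2.2 (hA i) (hB i)
  refine ⟨a', b', w', ha', hb', hpath, hinner, ?_⟩
  intro i j hij v hvi hvj
  have h1 : inter v ∈ E i := hEsupp i v (hsub i v hvi)
  have h2 : inter v ∈ E j := hEsupp j v (hsub j v hvj)
  exact Finset.disjoint_left.mp (hEdisj i j hij) h1 h2
end

section
/- Let G be a graph, k ∈ ℕ, and let A ⊆ V(G) be an infinite set that is k-connected in G. Then for any finite set S ⊆ V(G) with |S| < k there is a subset A′ ⊆ A with |A′| = |A| such that any two vertices of A′ lie in the same component of G − S. -/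
open Set

universe u

variable {V : Type u}

/-- There are `k` pairwise vertex-disjoint `A`–`B` paths in `G`
(one end in `A`, the other in `B`, no inner vertex in `A ∪ B`). -/
def HasDisjointPaths (G : SimpleGraph V) (k : ℕ) (A B : Set V) : Prop :=
  ∃ (a b : Fin k → V) (p : ∀ i, G.Walk (a i) (b i)),
    (∀ i, a i ∈ A) ∧ (∀ i, b i ∈ B) ∧ (∀ i, (p i).IsPath) ∧
    (∀ i, ∀ v ∈ (p i).support, v = a i ∨ v = b i ∨ v ∉ A ∪ B) ∧
    (∀ i j, i ≠ j → ∀ v, v ∈ (p i).support → v ∈ (p j).support → False)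

/-- `A` is `k`-connected in `G`: for all `Z₁, Z₂ ⊆ A` with `|Z₁| = |Z₂| = ℓ ≤ k`
there are `ℓ` pairwise disjoint `Z₁`–`Z₂` paths in `G`. -/
def KConnIn (G : SimpleGraph V) (k : ℕ) (A : Set V) : Prop :=
  ∀ ℓ : ℕ, ℓ ≤ k → ∀ Z₁ Z₂ : Finset V, ↑Z₁ ⊆ A → ↑Z₂ ⊆ A →
    Z₁.card = ℓ → Z₂.card = ℓ → HasDisjointPaths G ℓ ↑Z₁ ↑Z₂

/-- Walk from `a` to `b` avoiding `S`. -/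
def AvoidRel (G : SimpleGraph V) (S : Set V) (a b : V) : Prop :=
  ∃ p : G.Walk a b, ∀ v ∈ p.support, v ∉ S

lemma AvoidRel.refl {G : SimpleGraph V} {S : Set V} {a : V} (h : a ∉ S) :
    AvoidRel G S a a :=
  ⟨SimpleGraph.Walk.nil, by simp [h]⟩

lemma AvoidRel.symm {G : SimpleGraph V} {S : Set V} {a b : V}
    (h : AvoidRel G S a b) : AvoidRel G S b a := by
  obtain ⟨p, hp⟩ := h
  exact ⟨p.reverse, by simpa using hp⟩

lemma AvoidRel.trans {G : SimpleGraph V} {S : Set V} {a b c : V}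
    (h : AvoidRel G S a b) (h' : AvoidRel G S b c) : AvoidRel G S a c := by
  obtain ⟨p, hp⟩ := h
  obtain ⟨q, hq⟩ := h'
  refine ⟨p.append q, fun v hv => ?_⟩
  rcases (SimpleGraph.Walk.mem_support_append_iff _ _).1 hv with h | h
  · exact hp v h
  · exact hq v h

/-- From `S.ncard + 1` disjoint paths, one avoids `S`. -/
lemma connector {G : SimpleGraph V} {S : Set V} (hS : S.Finite)
    {Z₁ Z₂ : Set V} (h : HasDisjointPaths G (S.ncard + 1) Z₁ Z₂) :
    ∃ x ∈ Z₁, ∃ y ∈ Z₂, AvoidRel G S x y := by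
  classical
  obtain ⟨a, b, p, ha, hb, _, _, hdisj⟩ := h
  by_contra hcon
  push_neg at hcon
  have hmeet : ∀ i, ∃ v ∈ (p i).support, v ∈ S := by
    intro i
    by_contra hni
    push_neg at hni
    exact hcon (a i) (ha i) (b i) (hb i) ⟨p i, hni⟩
  choose g hg1 hg2 using hmeet
  have hinj : Function.Injective g := by
    intro i j hij
    by_contra hne
    exact hdisj i j hne (g i) (hg1 i) (hij ▸ hg1 j)
  have hsub : Finset.univ.image g ⊆ hS.toFinset := by
    intro v hv
    simp only [Finset.mem_image] at hv
    obtain ⟨i, _, rfl⟩ := hv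
    simpa using hg2 i
  have := Finset.card_le_card hsub
  rw [Finset.card_image_of_injective _ hinj, Finset.card_univ, Fintype.card_fin,
    (Set.ncard_eq_toFinset_card S hS).symm] at this
  omega

/-- Removing a finite set from an infinite set preserves cardinality. -/
lemma mk_diff_of_finite {X Y : Set V} (hX : X.Infinite) (hY : Y.Finite) :
    Cardinal.mk ↥(X \ Y) = Cardinal.mk X := by
  have h1 : X \ Y = X \ (X ∩ Y) := by ext x; simp
  have h3 := Cardinal.mk_diff_add_mk (Set.inter_subset_left (s := X) (t := Y))
  haveI : Finite ↥(X ∩ Y) := (hY.inter_of_right X).to_subtype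
  have hfin : Cardinal.mk ↥(X ∩ Y) < Cardinal.aleph0 :=
    Cardinal.lt_aleph0_of_finite _
  have hinf : Cardinal.aleph0 ≤ Cardinal.mk ↥(X \ Y) := by
    rw [Cardinal.aleph0_le_mk_iff]
    exact (hX.diff hY).to_subtype
  rw [h1] at hinf
  rw [← h3, Cardinal.add_eq_left hinf (le_of_lt (lt_of_lt_of_le hfin hinf)), ← h1]

/-- If all `AvoidRel`-classes within infinite `B` are finite, we can find
arbitrarily many pairwise unrelated points of `B`. -/
lemma exists_pairwise_unrel {G : SimpleGraph V} {S : Set V} {B : Set V}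
    (hB : B.Infinite) (hBS : ∀ b ∈ B, b ∉ S)
    (hfin : ∀ a ∈ B, {x ∈ B | AvoidRel G S a x}.Finite) (n : ℕ) :
    ∃ T : Finset V, ↑T ⊆ B ∧ T.card = n ∧
      ∀ x ∈ T, ∀ y ∈ T, x ≠ y → ¬ AvoidRel G S x y := by
  classical
  induction n with
  | zero => exact ⟨∅, by simp⟩
  | succ m ih =>
    obtain ⟨T, hTB, hTcard, hTrel⟩ := ih
    have hU : (⋃ a ∈ T, {x ∈ B | AvoidRel G S a x}).Finite :=
      Set.Finite.biUnion T.finite_toSet (fun a haT => hfin a (hTB haT))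
    obtain ⟨x, hxB, hxU⟩ := (hB.diff hU).nonempty
    have hxnotrel : ∀ a ∈ T, ¬ AvoidRel G S a x := by
      intro a haT hrel
      exact hxU (Set.mem_biUnion haT ⟨hxB, hrel⟩)
    have hxT : x ∉ T := fun hxT => hxnotrel x hxT (AvoidRel.refl (hBS x hxB))
    refine ⟨insert x T, ?_, ?_, ?_⟩
    · rw [Finset.coe_insert]
      exact Set.insert_subset hxB hTB
    · rw [Finset.card_insert_of_notMem hxT, hTcard]
    · intro a ha b hb hab hr
      rcases Finset.mem_insert.1 ha with h1 | h1 <;> rcases Finset.mem_insert.1 hb with h2 | h2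
      · exact hab (h1.trans h2.symm)
      · subst h1; exact hxnotrel b h2 hr.symm
      · subst h2; exact hxnotrel a h1 hr
      · exact hTrel a h1 b h2 hab hr

/-- If an infinite set `A` is `k`-connected in `G`, then for every finite
`S ⊆ V(G)` with `|S| < k` there is `A' ⊆ A` with `|A'| = |A|` lying in a
single component of `G − S`. -/
theorem kconn_delete_small (G : SimpleGraph V) (k : ℕ) (A : Set V)
    (hA : A.Infinite) (hk : KConnIn G k A)
    (S : Set V) (hS : S.Finite) (hSk : S.ncard < k) :
    ∃ A' ⊆ A, Cardinal.mk A' = Cardinal.mk A ∧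
      ∀ a ∈ A', ∀ b ∈ A', ∃ p : G.Walk a b, ∀ v ∈ p.support, v ∉ S := by
  classical
  set B := A \ S with hBdef
  have hB : B.Infinite := hA.diff hS
  have hBA : B ⊆ A := Set.diff_subset
  have hBS : ∀ b ∈ B, b ∉ S := fun b hb => hb.2
  have key : ∀ Z₁ Z₂ : Finset V, ↑Z₁ ⊆ A → ↑Z₂ ⊆ A → Z₁.card = S.ncard + 1 →
      Z₂.card = S.ncard + 1 → ∃ x ∈ Z₁, ∃ y ∈ Z₂, AvoidRel G S x y := by
    intro Z₁ Z₂ h1 h2 hc1 hc2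
    obtain ⟨x, hx, y, hy, hr⟩ :=
      connector hS (hk (S.ncard + 1) (by omega) Z₁ Z₂ h1 h2 hc1 hc2)
    exact ⟨x, hx, y, hy, hr⟩
  by_cases hex : ∃ a ∈ B, {x ∈ B | AvoidRel G S a x}.Infinite
  · obtain ⟨a, haB, hCa⟩ := hex
    set C := {x ∈ B | AvoidRel G S a x} with hC
    have hCB : C ⊆ B := fun x hx => hx.1
    by_cases hrest : (B \ C).Finite
    · refine ⟨C, hCB.trans hBA, ?_, ?_⟩
      · calc Cardinal.mk ↥C = Cardinal.mk ↥(B \ (B \ C)) := by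
              rw [Set.diff_diff_cancel_left hCB]
          _ = Cardinal.mk ↥B := mk_diff_of_finite hB hrest
          _ = Cardinal.mk ↥A := mk_diff_of_finite hA hS
      · intro x hx y hy
        obtain ⟨p, hp⟩ := (hx.2.symm).trans hy.2
        exact ⟨p, hp⟩
    · exfalso
      have hD : (B \ C).Infinite := hrest
      obtain ⟨Z₁, hZ₁C, hZ₁c⟩ := hCa.exists_subset_card_eq (S.ncard + 1)
      obtain ⟨Z₂, hZ₂D, hZ₂c⟩ := hD.exists_subset_card_eq (S.ncard + 1)
      obtain ⟨x, hx, y, hy, hr⟩ := key Z₁ Z₂ (hZ₁C.trans (hCB.trans hBA))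
        (hZ₂D.trans ((Set.diff_subset).trans hBA)) hZ₁c hZ₂c
      have hxC : x ∈ C := hZ₁C hx
      have hyD : y ∈ B \ C := hZ₂D hy
      exact hyD.2 ⟨hyD.1, hxC.2.trans hr⟩
  · push_neg at hex
    have hallfin : ∀ a ∈ B, {x ∈ B | AvoidRel G S a x}.Finite :=
      fun a ha => hex a ha
    obtain ⟨T, hTB, hTcard, hTrel⟩ :=
      exists_pairwise_unrel hB hBS hallfin (2 * (S.ncard + 1))
    obtain ⟨Z₁, hZ₁T, hZ₁c⟩ := Finset.exists_subset_card_eq (s := T) (n := S.ncard + 1) (by omega)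
    have hZ₂c : (T \ Z₁).card = S.ncard + 1 := by
      rw [Finset.card_sdiff_of_subset hZ₁T, hTcard, hZ₁c]; omega
    exfalso
    obtain ⟨x, hx, y, hy, hr⟩ := key Z₁ (T \ Z₁)
      ((Finset.coe_subset.2 hZ₁T).trans (hTB.trans hBA))
      ((Finset.coe_subset.2 (Finset.sdiff_subset)).trans (hTB.trans hBA)) hZ₁c hZ₂c
    have hyT := Finset.mem_sdiff.1 hy
    exact hTrel x (hZ₁T hx) y hyT.1 (fun h => hyT.2 (h ▸ hx)) hr
end

section
/- Let M be a minor of a graph G, witnessed by a family of branch sets, and let A ⊆ V(M) be k-connected in M for some k ∈ ℕ. Then any set A′ ⊆ V(G) with |A′| ≥ k consisting of at most one vertex from each branch set of a vertex of A (one for each vertex of A represented) is k-connected in G. -/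
open Set

universe u v

variable {V : Type u}

lemma lift_walk {W : Type v} (G : SimpleGraph V) (M : SimpleGraph W)
    (B : W → Set V)
    (hconn : ∀ w, ∀ a ∈ B w, ∀ b ∈ B w,
      ∃ p : G.Walk a b, ∀ v ∈ p.support, v ∈ B w)
    (hadj : ∀ w w', w ≠ w' →
      (M.Adj w w' ↔ ∃ a ∈ B w, ∃ b ∈ B w', G.Adj a b)) :
    ∀ {w₀ w₁ : W} (p : M.Walk w₀ w₁) (x y : V), x ∈ B w₀ → y ∈ B w₁ →
      ∃ q : G.Walk x y, ∀ v ∈ q.support, ∃ w ∈ p.support, v ∈ B w := by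
  intro w₀ w₁ p
  induction p with
  | nil =>
    intro x y hx hy
    obtain ⟨q, hq⟩ := hconn _ x hx y hy
    exact ⟨q, fun v hv => ⟨_, by simp, hq v hv⟩⟩
  | @cons u w w' h p ih =>
    intro x y hx hy
    obtain ⟨a, ha, b, hb, hab⟩ := (hadj _ _ h.ne).1 h
    obtain ⟨q₁, hq₁⟩ := hconn _ x hx a ha
    obtain ⟨q₂, hq₂⟩ := ih b y hb hy
    refine ⟨q₁.append (SimpleGraph.Walk.cons hab q₂), ?_⟩
    intro v hv
    rw [SimpleGraph.Walk.mem_support_append_iff] at hv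
    rcases hv with hv | hv
    · exact ⟨u, by simp, hq₁ v hv⟩
    · rw [SimpleGraph.Walk.support_cons, List.mem_cons] at hv
      rcases hv with rfl | hv
      · exact ⟨u, by simp, ha⟩
      · obtain ⟨z, hz, hzB⟩ := hq₂ v hv
        exact ⟨z, by simp [hz], hzB⟩

/-- If `M` is a minor of `G` witnessed by branch sets `B`, and `A ⊆ V(M)` is
`k`-connected in `M`, then any `A' ⊆ V(G)` with `|A'| ≥ k` consisting of at most
one vertex from each branch set of a vertex of `A` is `k`-connected in `G`. -/
theorem kconn_of_minor {W : Type v} (G : SimpleGraph V) (M : SimpleGraph W)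
    (B : W → Set V)
    (hne : ∀ w, (B w).Nonempty)
    (hconn : ∀ w, ∀ a ∈ B w, ∀ b ∈ B w,
      ∃ p : G.Walk a b, ∀ v ∈ p.support, v ∈ B w)
    (hdisj : ∀ w w', w ≠ w' → Disjoint (B w) (B w'))
    (hadj : ∀ w w', w ≠ w' →
      (M.Adj w w' ↔ ∃ a ∈ B w, ∃ b ∈ B w', G.Adj a b))
    (k : ℕ) (A : Set W) (hA : KConnIn M k A)
    (A' : Set V)
    (hsub : A' ⊆ ⋃ w ∈ A, B w)
    (hone : ∀ w ∈ A, (A' ∩ B w).Subsingleton)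
    (hcard : (k : Cardinal) ≤ Cardinal.mk A') :
    KConnIn G k A' := by
  classical
  intro ℓ hℓ Z₁ Z₂ hZ₁ hZ₂ hc₁ hc₂
  rcases Nat.eq_zero_or_pos ℓ with rfl | hpos
  · exact ⟨Fin.elim0, Fin.elim0, fun i => i.elim0, fun i => i.elim0, fun i => i.elim0,
      fun i => i.elim0, fun i => i.elim0, fun i j _ => i.elim0⟩
  have hex : ∀ v ∈ A', ∃ w ∈ A, v ∈ B w := fun v hv => by
    simpa using hsub hv
  -- W is nonempty
  obtain ⟨z₀, hz₀⟩ := Finset.card_pos.mp (hc₁ ▸ hpos)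
  obtain ⟨w₀, hw₀, -⟩ := hex z₀ (hZ₁ hz₀)
  haveI : Nonempty W := ⟨w₀⟩
  set f : V → W := fun v => if h : v ∈ A' then (hex v h).choose else Classical.arbitrary W
    with hf
  have hfA : ∀ v ∈ A', f v ∈ A := fun v hv => by
    simp only [hf, dif_pos hv]; exact (hex v hv).choose_spec.1
  have hfB : ∀ v ∈ A', v ∈ B (f v) := fun v hv => by
    simp only [hf, dif_pos hv]; exact (hex v hv).choose_spec.2
  have hBuniq : ∀ {v : V} {w w' : W}, v ∈ B w → v ∈ B w' → w = w' := by
    intro v w w' h h'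
    by_contra hne'
    exact Set.disjoint_left.mp (hdisj _ _ hne') h h'
  have hinjA' : ∀ v ∈ A', ∀ v' ∈ A', f v = f v' → v = v' := by
    intro v hv v' hv' hfv
    exact hone (f v) (hfA v hv) ⟨hv, hfB v hv⟩ ⟨hv', hfv ▸ hfB v' hv'⟩
  have hcard₁ : (Z₁.image f).card = ℓ := by
    rw [Finset.card_image_of_injOn fun v hv v' hv' h => hinjA' v (hZ₁ hv) v' (hZ₁ hv') h]
    exact hc₁
  have hcard₂ : (Z₂.image f).card = ℓ := by
    rw [Finset.card_image_of_injOn fun v hv v' hv' h => hinjA' v (hZ₂ hv) v' (hZ₂ hv') h]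
    exact hc₂
  have hWsub₁ : ↑(Z₁.image f) ⊆ A := by
    intro w hw
    obtain ⟨z, hz, rfl⟩ := Finset.mem_image.mp (Finset.mem_coe.mp hw)
    exact hfA z (hZ₁ hz)
  have hWsub₂ : ↑(Z₂.image f) ⊆ A := by
    intro w hw
    obtain ⟨z, hz, rfl⟩ := Finset.mem_image.mp (Finset.mem_coe.mp hw)
    exact hfA z (hZ₂ hz)
  obtain ⟨a, b, p, ha, hb, hpath, hinner, hdp⟩ :=
    hA ℓ hℓ (Z₁.image f) (Z₂.image f) hWsub₁ hWsub₂ hcard₁ hcard₂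
  have h₁ : ∀ i, ∃ z ∈ Z₁, f z = a i := fun i =>
    Finset.mem_image.mp (Finset.mem_coe.mp (ha i))
  have h₂ : ∀ i, ∃ z ∈ Z₂, f z = b i := fun i =>
    Finset.mem_image.mp (Finset.mem_coe.mp (hb i))
  choose z₁ hz₁ hfz₁ using h₁
  choose z₂ hz₂ hfz₂ using h₂
  have hz₁B : ∀ i, z₁ i ∈ B (a i) := fun i => hfz₁ i ▸ hfB _ (hZ₁ (hz₁ i))
  have hz₂B : ∀ i, z₂ i ∈ B (b i) := fun i => hfz₂ i ▸ hfB _ (hZ₂ (hz₂ i))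
  have hlift := fun i => lift_walk G M B hconn hadj (p i) (z₁ i) (z₂ i) (hz₁B i) (hz₂B i)
  choose q hq using hlift
  refine ⟨z₁, z₂, fun i => (q i).bypass, hz₁, hz₂,
    fun i => SimpleGraph.Walk.bypass_isPath _, ?_, ?_⟩
  · intro i v hv
    have hv' := (q i).support_bypass_subset hv
    obtain ⟨w, hw, hvB⟩ := hq i v hv'
    by_cases hvZ : v ∈ (↑Z₁ : Set V) ∪ ↑Z₂
    · have hvA' : v ∈ A' := by
        rcases hvZ with h | h
        · exact hZ₁ h
        · exact hZ₂ h
      have hwf : w = f v := hBuniq hvB (hfB v hvA')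
      have := hinner i (f v) (hwf ▸ hw)
      rcases this with h | h | h
      · exact Or.inl (hone (a i) (h ▸ hfA v hvA') ⟨hvA', h ▸ hfB v hvA'⟩ ⟨hZ₁ (hz₁ i), hz₁B i⟩)
      · exact Or.inr (Or.inl (hone (b i) (h ▸ hfA v hvA') ⟨hvA', h ▸ hfB v hvA'⟩
          ⟨hZ₂ (hz₂ i), hz₂B i⟩))
      · exfalso
        apply h
        rcases hvZ with hv1 | hv2
        · exact Or.inl (Finset.mem_coe.mpr (Finset.mem_image_of_mem f (Finset.mem_coe.mp hv1)))
        · exact Or.inr (Finset.mem_coe.mpr (Finset.mem_image_of_mem f (Finset.mem_coe.mp hv2)))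
    · exact Or.inr (Or.inr hvZ)
  · intro i j hij v hvi hvj
    obtain ⟨w, hw, hvB⟩ := hq i v ((q i).support_bypass_subset hvi)
    obtain ⟨w', hw', hvB'⟩ := hq j v ((q j).support_bypass_subset hvj)
    exact hdp i j hij w hw (hBuniq hvB hvB' ▸ hw')
end

section
/- Let G be a graph and ω an end of G. If deg(ω) is uncountable, then dom(ω) is infinite. -/
open Set

universe u

variable {V : Type u}

/-- A ray in `G`: an injective sequence of vertices with consecutive vertices adjacent. -/
def IsRay (G : SimpleGraph V) (R : ℕ → V) : Prop :=
  Function.Injective R ∧ ∀ n, G.Adj (R n) (R (n + 1))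

/-- Two rays are equivalent (belong to the same end) if no finite vertex set
separates them: for every finite `S` some vertex of one ray is joined to some
vertex of the other by a walk avoiding `S`. -/
def RayEquiv (G : SimpleGraph V) (R R' : ℕ → V) : Prop :=
  ∀ S : Set V, S.Finite →
    ∃ (m n : ℕ) (p : G.Walk (R m) (R' n)), ∀ v ∈ p.support, v ∉ S

/-- `R` is a ray of the end represented by the ray `ω₀`. -/
def OmegaRay (G : SimpleGraph V) (ω₀ R : ℕ → V) : Prop :=
  IsRay G R ∧ RayEquiv G R ω₀

/-- `d` dominates the end represented by `ω₀`: for every finite `S` not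
containing `d`, `d` can be joined to the ray by a walk avoiding `S`. -/
def Dominates (G : SimpleGraph V) (ω₀ : ℕ → V) (d : V) : Prop :=
  ∀ S : Set V, S.Finite → d ∉ S →
    ∃ (n : ℕ) (p : G.Walk d (ω₀ n)), ∀ v ∈ p.support, v ∉ S

/-- The set of vertices dominating the end represented by `ω₀`. -/
def DomSet (G : SimpleGraph V) (ω₀ : ℕ → V) : Set V :=
  {d | Dominates G ω₀ d}

/-- `v` lies in `C(S, ω)`, the component of `G − S` containing the rays of the
end represented by `ω₀`: some vertex of the ray is reachable from `v` by a walk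
avoiding `S`. -/
def InC (G : SimpleGraph V) (ω₀ : ℕ → V) (S : Set V) (v : V) : Prop :=
  ∃ (n : ℕ) (p : G.Walk v (ω₀ n)), ∀ x ∈ p.support, x ∉ S

/-- `(S n)` is an `ω`-defining sequence for the end represented by `ω₀`:
finite vertex sets with `C(S (n+1), ω) ⊆ C(S n, ω)`, pairwise intersections
contained in `Dom(ω)`, and `⋂ₙ C(S n, ω) = ∅`. -/
def OmegaDefining (G : SimpleGraph V) (ω₀ : ℕ → V) (S : ℕ → Set V) : Prop :=
  (∀ n, (S n).Finite) ∧
  (∀ n, ∀ v, InC G ω₀ (S (n + 1)) v → InC G ω₀ (S n) v) ∧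
  (∀ m n, m ≠ n → S m ∩ S n ⊆ DomSet G ω₀) ∧
  (∀ v, ∃ n, ¬ InC G ω₀ (S n) v)

/-- The degree of the end represented by `ω₀`: the supremum of the cardinalities
of sets of pairwise disjoint rays of that end. -/
noncomputable def endDegree (G : SimpleGraph V) (ω₀ : ℕ → V) : Cardinal.{u} :=
  ⨆ s : {s : Set (ℕ → V) // (∀ R ∈ s, OmegaRay G ω₀ R) ∧
      s.Pairwise fun R R' => Disjoint (Set.range R) (Set.range R')},
    Cardinal.mk s.1

section Aux

variable {V : Type u}

/-- Walk along a ray from `R 0` to `R m`, supported in the range of `R`. -/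
lemma raySegment (G : SimpleGraph V) (R : ℕ → V)
    (hadj : ∀ n, G.Adj (R n) (R (n + 1))) (m : ℕ) :
    ∃ w : G.Walk (R 0) (R m), ∀ x ∈ w.support, x ∈ Set.range R := by
  induction m with
  | zero => exact ⟨SimpleGraph.Walk.nil, by simp⟩
  | succ m ih =>
    obtain ⟨w, hw⟩ := ih
    refine ⟨w.concat (hadj m), ?_⟩
    intro x hx
    rw [SimpleGraph.Walk.support_concat, List.mem_append] at hx
    rcases hx with hx | hx
    · exact hw x hx
    · simp only [List.mem_singleton] at hx
      exact hx ▸ ⟨m + 1, rfl⟩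

end Aux

/-- If the degree of an end is uncountable, then the set of vertices
dominating it is infinite. -/
theorem dom_infinite_of_uncountable_degree
    (G : SimpleGraph V) (ω₀ : ℕ → V) (hω : IsRay G ω₀)
    (h : Cardinal.aleph0 < endDegree G ω₀) :
    (DomSet G ω₀).Infinite := by
  classical
  by_contra hfin
  rw [Set.not_infinite] at hfin
  -- Step 1: extract an uncountable family of pairwise disjoint ω-rays
  have h1 : ∃ s : {s : Set (ℕ → V) // (∀ R ∈ s, OmegaRay G ω₀ R) ∧
      s.Pairwise fun R R' => Disjoint (Set.range R) (Set.range R')},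
      Cardinal.aleph0 < Cardinal.mk s.1 := by
    by_contra hc
    push_neg at hc
    have hne : Nonempty {s : Set (ℕ → V) // (∀ R ∈ s, OmegaRay G ω₀ R) ∧
        s.Pairwise fun R R' => Disjoint (Set.range R) (Set.range R')} :=
      ⟨⟨∅, by simp, by simp⟩⟩
    exact absurd h (not_lt.2 (ciSup_le' hc))
  obtain ⟨⟨s, hsray, hsdisj⟩, hs⟩ := h1
  have hsc : ¬ s.Countable := by
    intro hc
    exact absurd hs (not_lt.2 (Cardinal.le_aleph0_iff_set_countable.2 hc))
  -- Countably many rays of `s` can meet a fixed countable set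
  have meetsCount : ∀ Z : Set V, Z.Countable →
      {R ∈ s | ∃ x ∈ Z, x ∈ Set.range R}.Countable := by
    intro Z hZ
    have hsub : {R ∈ s | ∃ x ∈ Z, x ∈ Set.range R} ⊆
        ⋃ x ∈ Z, {R ∈ s | x ∈ Set.range R} := by
      rintro R ⟨h1, x, hx, hxR⟩
      exact Set.mem_biUnion hx ⟨h1, hxR⟩
    refine Set.Countable.mono hsub (Set.Countable.biUnion hZ fun x hx => ?_)
    apply Set.Subsingleton.countable
    rintro R ⟨hRs, hxR⟩ R' ⟨hR's, hxR'⟩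
    by_contra hne
    exact Set.disjoint_left.1 (hsdisj hRs hR's hne) hxR hxR'
  -- Step 2: restrict to rays avoiding D := DomSet
  have hDc : (DomSet G ω₀).Countable := hfin.countable
  set s₂ : Set (ℕ → V) := {R ∈ s | ∀ x ∈ DomSet G ω₀, x ∉ Set.range R} with hs₂def
  have hs₂c : ¬ s₂.Countable := by
    intro hc
    apply hsc
    have : s ⊆ s₂ ∪ {R ∈ s | ∃ x ∈ DomSet G ω₀, x ∈ Set.range R} := by
      intro R hR
      by_cases hmeet : ∃ x ∈ DomSet G ω₀, x ∈ Set.range R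
      · exact Or.inr ⟨hR, hmeet⟩
      · push_neg at hmeet
        exact Or.inl ⟨hR, hmeet⟩
    exact Set.Countable.mono this (hc.union (meetsCount _ hDc))
  -- Step 3: every ray in s₂ connects from its start to some ω₀ n avoiding D
  have hwalk : ∀ R ∈ s₂, ∃ n, ∃ w : G.Walk (R 0) (ω₀ n),
      ∀ x ∈ w.support, x ∉ DomSet G ω₀ := by
    rintro R ⟨hRs, hRD⟩
    obtain ⟨hRray, hReq⟩ := hsray R hRs
    obtain ⟨m, n, p, hp⟩ := hReq (DomSet G ω₀) hfin
    obtain ⟨w, hw⟩ := raySegment G R hRray.2 m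
    refine ⟨n, w.append p, ?_⟩
    intro x hx
    rw [SimpleGraph.Walk.mem_support_append_iff] at hx
    rcases hx with hx | hx
    · intro hxD; exact hRD x hxD (hw x hx)
    · exact hp x hx
  -- Step 4: pigeonhole — some fixed endpoint z = ω₀ n* works for uncountably many rays
  have h4 : ∃ n : ℕ, ¬ {R ∈ s₂ | ∃ w : G.Walk (R 0) (ω₀ n),
      ∀ x ∈ w.support, x ∉ DomSet G ω₀}.Countable := by
    by_contra hc
    push_neg at hc
    apply hs₂c
    have : s₂ ⊆ ⋃ n : ℕ, {R ∈ s₂ | ∃ w : G.Walk (R 0) (ω₀ n),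
        ∀ x ∈ w.support, x ∉ DomSet G ω₀} := by
      intro R hR
      obtain ⟨n, w, hw⟩ := hwalk R hR
      exact Set.mem_iUnion.2 ⟨n, hR, w, hw⟩
    exact Set.Countable.mono this (Set.countable_iUnion hc)
  obtain ⟨nz, hs₁c⟩ := h4
  set z : V := ω₀ nz with hzdef
  set s₁ : Set (ℕ → V) := {R ∈ s₂ | ∃ w : G.Walk (R 0) z,
      ∀ x ∈ w.support, x ∉ DomSet G ω₀} with hs₁def
  have hs₁s : s₁ ⊆ s := fun R hR => hR.1.1
  -- z is not dominating
  have hzD : z ∉ DomSet G ω₀ := by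
    have hne : s₁.Nonempty := by
      rcases Set.eq_empty_or_nonempty s₁ with he | hne
      · exact absurd (he ▸ Set.countable_empty) hs₁c
      · exact hne
    obtain ⟨R, _, w, hw⟩ := hne
    exact hw z w.end_mem_support
  -- Step 5: no vertex outside D is a "hub"
  have hubDom : ∀ v, v ∉ DomSet G ω₀ →
      ¬ (∀ S : Set V, S.Finite → v ∉ S → ∃ R ∈ s₁,
        (∀ x ∈ S, x ∉ Set.range R) ∧ ∃ q : G.Walk v (R 0), ∀ x ∈ q.support, x ∉ S) := by
    intro v hvD hhub
    apply hvD
    intro S hS hvS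
    obtain ⟨R, hRs₁, hRS, q, hq⟩ := hhub S hS hvS
    obtain ⟨hRray, hReq⟩ := hsray R (hs₁s hRs₁)
    obtain ⟨m, n, p, hp⟩ := hReq S hS
    obtain ⟨w, hw⟩ := raySegment G R hRray.2 m
    refine ⟨n, (q.append w).append p, ?_⟩
    intro x hx
    rw [SimpleGraph.Walk.mem_support_append_iff,
        SimpleGraph.Walk.mem_support_append_iff] at hx
    rcases hx with (hx | hx) | hx
    · exact hq x hx
    · intro hxS; exact hRS x hxS (hw x hx)
    · exact hp x hx
  -- choose separators
  have hsep : ∀ v : V, v ∉ DomSet G ω₀ → ∃ S : Set V, S.Finite ∧ v ∉ S ∧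
      ∀ R ∈ s₁, (∃ x ∈ S, x ∈ Set.range R) ∨
        ∀ q : G.Walk v (R 0), ∃ x ∈ q.support, x ∈ S := by
    intro v hvD
    have := hubDom v hvD
    push_neg at this
    obtain ⟨S, hSfin, hvS, hbad⟩ := this
    refine ⟨S, hSfin, hvS, ?_⟩
    intro R hR
    by_cases hm : ∃ x ∈ S, x ∈ Set.range R
    · exact Or.inl hm
    · push_neg at hm
      exact Or.inr (hbad R hR hm)
  set T : V → Set V := fun v =>
    if hv : v ∈ DomSet G ω₀ then ∅ else (hsep v hv).choose with hTdef
  have hTfin : ∀ v, (T v).Finite := by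
    intro v
    by_cases hv : v ∈ DomSet G ω₀ <;> simp only [hTdef, hv, dif_pos, dif_neg, not_false_iff]
    · exact Set.finite_empty
    · exact (hsep v hv).choose_spec.1
  have hTnotmem : ∀ v (hv : v ∉ DomSet G ω₀), v ∉ T v := by
    intro v hv
    simp only [hTdef, dif_neg hv]
    exact (hsep v hv).choose_spec.2.1
  have hTsep : ∀ v (hv : v ∉ DomSet G ω₀), ∀ R ∈ s₁,
      (∃ x ∈ T v, x ∈ Set.range R) ∨
        ∀ q : G.Walk v (R 0), ∃ x ∈ q.support, x ∈ T v := by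
    intro v hv
    simp only [hTdef, dif_neg hv]
    exact (hsep v hv).choose_spec.2.2
  -- closure of {z} under T
  set Zc : ℕ → Set V := fun n => Nat.rec {z} (fun _ Zn => Zn ∪ ⋃ v ∈ Zn, T v) n with hZcdef
  have hZcfin : ∀ n, (Zc n).Finite := by
    intro n
    induction n with
    | zero => exact Set.finite_singleton z
    | succ n ih => exact ih.union (ih.biUnion fun v _ => hTfin v)
  set Z : Set V := ⋃ n, Zc n with hZdef
  have hZc : Z.Countable := Set.countable_iUnion fun n => (hZcfin n).countable
  have hTZ : ∀ v ∈ Z, T v ⊆ Z := by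
    intro v hv
    rw [hZdef, Set.mem_iUnion] at hv
    obtain ⟨n, hn⟩ := hv
    intro x hx
    rw [hZdef, Set.mem_iUnion]
    exact ⟨n + 1, Or.inr (Set.mem_biUnion hn hx)⟩
  have hzZ : z ∈ Z := Set.mem_iUnion.2 ⟨0, rfl⟩
  -- pick a ray avoiding Z
  have hRstar : ∃ R ∈ s₁, ∀ x ∈ Z, x ∉ Set.range R := by
    by_contra hc
    push_neg at hc
    apply hs₁c
    have : s₁ ⊆ {R ∈ s | ∃ x ∈ Z, x ∈ Set.range R} := by
      intro R hR
      obtain ⟨x, hxZ, hxR⟩ := hc R hR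
      exact ⟨hs₁s hR, x, hxZ, hxR⟩
    exact Set.Countable.mono this (meetsCount Z hZc)
  obtain ⟨R, hRs₁, hRZ⟩ := hRstar
  -- the key induction
  have key : ∀ L : ℕ, ∀ v, v ∈ Z → v ∉ DomSet G ω₀ →
      ∀ p : G.Walk v (R 0), p.length ≤ L →
        (∀ x ∈ p.support, x ∉ DomSet G ω₀) → False := by
    intro L
    induction L with
    | zero =>
      intro v hvZ hvD p hlen hpD
      have hmeet : ∃ x ∈ p.support, x ∈ T v := by
        rcases hTsep v hvD R hRs₁ with hm | hw
        · obtain ⟨x, hxT, hxR⟩ := hm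
          exact absurd hxR (hRZ x (hTZ v hvZ hxT))
        · exact hw p
      obtain ⟨x, hxp, hxT⟩ := hmeet
      have hxv : x ≠ v := fun he => hTnotmem v hvD (he ▸ hxT)
      have htake : (p.takeUntil x hxp).append (p.dropUntil x hxp) = p := p.take_spec hxp
      have hlq : (p.dropUntil x hxp).length < p.length := by
        have := congrArg SimpleGraph.Walk.length htake
        rw [SimpleGraph.Walk.length_append] at this
        have hpos : 0 < (p.takeUntil x hxp).length := by
          rcases Nat.eq_zero_or_pos (p.takeUntil x hxp).length with h0 | hp
          · exact absurd (SimpleGraph.Walk.eq_of_length_eq_zero h0).symm hxv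
          · exact hp
        omega
      omega
    | succ L ih =>
      intro v hvZ hvD p hlen hpD
      have hmeet : ∃ x ∈ p.support, x ∈ T v := by
        rcases hTsep v hvD R hRs₁ with hm | hw
        · obtain ⟨x, hxT, hxR⟩ := hm
          exact absurd hxR (hRZ x (hTZ v hvZ hxT))
        · exact hw p
      obtain ⟨x, hxp, hxT⟩ := hmeet
      have hxv : x ≠ v := fun he => hTnotmem v hvD (he ▸ hxT)
      set q := p.dropUntil x hxp with hqdef
      have htake : (p.takeUntil x hxp).append q = p := p.take_spec hxp
      have hlq : q.length < p.length := by
        have := congrArg SimpleGraph.Walk.length htake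
        rw [SimpleGraph.Walk.length_append] at this
        have hpos : 0 < (p.takeUntil x hxp).length := by
          rcases Nat.eq_zero_or_pos (p.takeUntil x hxp).length with h0 | hp
          · exact absurd (SimpleGraph.Walk.eq_of_length_eq_zero h0).symm hxv
          · exact hp
        omega
      have hqsupp : ∀ y ∈ q.support, y ∈ p.support :=
        fun y hy => SimpleGraph.Walk.support_dropUntil_subset p hxp hy
      exact ih x (hTZ v hvZ hxT) (hpD x hxp) q (by omega)
        (fun y hy => hpD y (hqsupp y hy))
  -- conclude
  obtain ⟨w, hw⟩ := hRs₁.2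
  have hwrev : ∀ x ∈ w.reverse.support, x ∉ DomSet G ω₀ := by
    intro x hx
    rw [SimpleGraph.Walk.support_reverse, List.mem_reverse] at hx
    exact hw x hx
  exact key w.reverse.length z hzZ hzD w.reverse le_rfl hwrev
end

section
/- Let G be a graph, k ∈ ℕ, and A ⊆ V(G) infinite, and let κ ≤ |A| be an infinite cardinal. If there exists a subset A₁ ⊆ A with |A₁| = κ that is k-connected in G, then for every tree-decomposition (T,𝒱) of G of adhesion less than k there exists a part V_t that cannot be separated from A by fewer than κ vertices. -/
open Set

universe u v

variable {V : Type u}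

namespace PNSaux

variable {ι : Type v}

/-- Nodes on the side of `st` w.r.t. deleting edge `e`. -/
def sideCl (T : SimpleGraph ι) (e : Sym2 ι) (st : ι) : Set ι :=
  {t | (T.deleteEdges {e}).Reachable t st}

/-- Vertices in parts on the side of `st`. -/
def USide (T : SimpleGraph ι) (𝒱 : ι → Set V) (e : Sym2 ι) (st : ι) : Set V :=
  ⋃ t ∈ sideCl T e st, 𝒱 t

lemma mem_USide {T : SimpleGraph ι} {𝒱 : ι → Set V} {e : Sym2 ι} {st : ι} {x : V} :
    x ∈ USide T 𝒱 e st ↔ ∃ t ∈ sideCl T e st, x ∈ 𝒱 t := by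
  simp [USide]

variable {T : SimpleGraph ι}

lemma not_reach (hT : T.IsTree) {s s' : ι} (h : T.Adj s s') :
    ¬ (T.deleteEdges {s(s,s')}).Reachable s s' := by
  have hb : T.IsBridge s(s,s') := SimpleGraph.isAcyclic_iff_forall_adj_isBridge.mp hT.2 h
  exact SimpleGraph.isBridge_iff.mp hb

lemma sideCl_step (hT : T.IsTree) {s s' : ι} (h : T.Adj s s') {t u : ι} (w : T.Walk t u)
    (hu : u ∈ sideCl T s(s,s') s ∨ u ∈ sideCl T s(s,s') s') :
    t ∈ sideCl T s(s,s') s ∨ t ∈ sideCl T s(s,s') s' := by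
  induction w with
  | nil => exact hu
  | @cons a y c hadj q ih =>
    rcases ih hu with hy | hy
    · by_cases he : s(a, y) = s(s, s')
      · rw [Sym2.eq_iff] at he
        rcases he with ⟨rfl, rfl⟩ | ⟨rfl, rfl⟩
        · exact Or.inl (SimpleGraph.Reachable.refl _)
        · exact Or.inr (SimpleGraph.Reachable.refl _)
      · refine Or.inl (SimpleGraph.Reachable.trans ⟨SimpleGraph.Walk.cons ?_ SimpleGraph.Walk.nil⟩ hy)
        exact SimpleGraph.deleteEdges_adj.mpr ⟨hadj, by simpa using he⟩
    · by_cases he : s(a, y) = s(s, s')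
      · rw [Sym2.eq_iff] at he
        rcases he with ⟨rfl, rfl⟩ | ⟨rfl, rfl⟩
        · exact Or.inl (SimpleGraph.Reachable.refl _)
        · exact Or.inr (SimpleGraph.Reachable.refl _)
      · refine Or.inr (SimpleGraph.Reachable.trans ⟨SimpleGraph.Walk.cons ?_ SimpleGraph.Walk.nil⟩ hy)
        exact SimpleGraph.deleteEdges_adj.mpr ⟨hadj, by simpa using he⟩

lemma sideCl_classify (hT : T.IsTree) {s s' : ι} (h : T.Adj s s') (t : ι) :
    t ∈ sideCl T s(s,s') s ∨ t ∈ sideCl T s(s,s') s' := by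
  obtain ⟨w⟩ := hT.1 t s
  exact sideCl_step hT h w (Or.inl (SimpleGraph.Reachable.refl _))

lemma sideCl_disj (hT : T.IsTree) {s s' : ι} (h : T.Adj s s') {t : ι}
    (h1 : t ∈ sideCl T s(s,s') s) (h2 : t ∈ sideCl T s(s,s') s') : False :=
  not_reach hT h (h1.symm.trans h2)

/-- Any walk in `T` between the two sides traverses the edge. -/
lemma walk_crosses (hT : T.IsTree) {s s' : ι} (h : T.Adj s s') {a b : ι}
    (ha : a ∈ sideCl T s(s,s') s) (hb : b ∈ sideCl T s(s,s') s') (w : T.Walk a b) :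
    s(s,s') ∈ w.edges := by
  by_contra hne
  have : (T.deleteEdges {s(s,s')}).Reachable a b :=
    ⟨w.toDeleteEdges _ (fun e he h' => hne (Set.mem_singleton_iff.mp h' ▸ he))⟩
  exact sideCl_disj hT h ha (this.trans hb)


section Decomp

variable {G : SimpleGraph V} {𝒱 : ι → Set V}
variable (hT : T.IsTree)
variable (hsep : ∀ t₁ t₂ t₃ : ι,
      (∃ p : T.Walk t₁ t₃, p.IsPath ∧ t₂ ∈ p.support) → 𝒱 t₁ ∩ 𝒱 t₃ ⊆ 𝒱 t₂)
variable (hedge : ∀ a b : V, G.Adj a b → ∃ t, a ∈ 𝒱 t ∧ b ∈ 𝒱 t)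
variable (hcover : ∀ x : V, ∃ t, x ∈ 𝒱 t)

include hT hsep in
lemma vsep {s s' : ι} (h : T.Adj s s') {a b : ι}
    (ha : a ∈ sideCl T s(s,s') s) (hb : b ∈ sideCl T s(s,s') s') :
    𝒱 a ∩ 𝒱 b ⊆ 𝒱 s ∩ 𝒱 s' := by
  classical
  obtain ⟨w⟩ := hT.1 a b
  have hcr : s(s,s') ∈ w.bypass.edges := walk_crosses hT h ha hb w.bypass
  have hs : s ∈ w.bypass.support := SimpleGraph.Walk.fst_mem_support_of_mem_edges _ hcr
  have hs' : s' ∈ w.bypass.support := SimpleGraph.Walk.snd_mem_support_of_mem_edges _ hcr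
  intro x hx
  exact ⟨hsep a s b ⟨w.bypass, SimpleGraph.Walk.bypass_isPath w, hs⟩ hx,
    hsep a s' b ⟨w.bypass, SimpleGraph.Walk.bypass_isPath w, hs'⟩ hx⟩

include hT hsep in
lemma umix {s s' : ι} (h : T.Adj s s') {x : V}
    (h1 : x ∈ USide T 𝒱 s(s,s') s) (h2 : x ∈ USide T 𝒱 s(s,s') s') :
    x ∈ 𝒱 s ∩ 𝒱 s' := by
  obtain ⟨a, haL, hxa⟩ := mem_USide.mp h1
  obtain ⟨b, hbR, hxb⟩ := mem_USide.mp h2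
  exact vsep hT hsep h haL hbR ⟨hxa, hxb⟩

include hcover in
lemma ucover (hT : T.IsTree) {s s' : ι} (h : T.Adj s s') (x : V) :
    x ∈ USide T 𝒱 s(s,s') s ∨ x ∈ USide T 𝒱 s(s,s') s' := by
  obtain ⟨t, ht⟩ := hcover x
  rcases sideCl_classify hT h t with hL | hR
  · exact Or.inl (mem_USide.mpr ⟨t, hL, ht⟩)
  · exact Or.inr (mem_USide.mpr ⟨t, hR, ht⟩)

lemma vpart_subset_uside {t : ι} {e : Sym2 ι} {st : ι} (h : t ∈ sideCl T e st) :
    𝒱 t ⊆ USide T 𝒱 e st := fun x hx => mem_USide.mpr ⟨t, h, hx⟩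

include hT hsep hedge in
/-- A walk in `G` leaving the `s`-side meets the adhesion set. -/
lemma ucross {s s' : ι} (h : T.Adj s s') {u w : V} (p : G.Walk u w)
    (hu : u ∈ USide T 𝒱 s(s,s') s) (hw : w ∉ USide T 𝒱 s(s,s') s) :
    ∃ x ∈ p.support, x ∈ 𝒱 s ∩ 𝒱 s' := by
  induction p with
  | nil => exact absurd hu hw
  | @cons a y c hadj q ih =>
    obtain ⟨t, hat, hyt⟩ := hedge a y hadj
    rcases sideCl_classify hT h t with htL | htR
    · exact (ih (vpart_subset_uside htL hyt) hw).imp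
        (fun x hx => ⟨List.mem_cons_of_mem _ hx.1, hx.2⟩)
    · exact ⟨a, SimpleGraph.Walk.start_mem_support _,
        umix hT hsep h hu (vpart_subset_uside htR hat)⟩

include hT hsep hedge in
/-- First-exit version: a walk starting in `W = USide \ 𝒱 s'` and ending outside the side
has an initial piece staying in `W` until it first meets the adhesion set. -/
lemma firstexit {s s' : ι} (h : T.Adj s s') {u w : V} (p : G.Walk u w)
    (hu : u ∈ USide T 𝒱 s(s,s') s) (hu' : u ∉ 𝒱 s') (hw : w ∉ USide T 𝒱 s(s,s') s) :
    ∃ x ∈ p.support, x ∈ 𝒱 s ∩ 𝒱 s' ∧ ∃ q : G.Walk u x,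
      ∀ y ∈ q.support, y = x ∨ (y ∈ USide T 𝒱 s(s,s') s ∧ y ∉ 𝒱 s') := by
  induction p with
  | nil => exact absurd hu hw
  | @cons a y c hadj q ih =>
    obtain ⟨t, hat, hyt⟩ := hedge a y hadj
    rcases sideCl_classify hT h t with htL | htR
    · have hyU : y ∈ USide T 𝒱 s(s,s') s := vpart_subset_uside htL hyt
      by_cases hy' : y ∈ 𝒱 s'
      · have hyX : y ∈ 𝒱 s ∩ 𝒱 s' := by
          have hs'R : s' ∈ sideCl T s(s,s') s' := SimpleGraph.Reachable.refl _
          obtain ⟨b, hbL, hyb⟩ := mem_USide.mp hyU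
          exact vsep hT hsep h hbL hs'R ⟨hyb, hy'⟩
        refine ⟨y, by simp, hyX, SimpleGraph.Walk.cons hadj SimpleGraph.Walk.nil, ?_⟩
        intro z hz
        simp only [SimpleGraph.Walk.support_cons, SimpleGraph.Walk.support_nil,
          List.mem_cons, List.mem_singleton] at hz
        rcases hz with rfl | hz
        · exact Or.inr ⟨hu, hu'⟩
        · rcases hz with rfl | hz
          · exact Or.inl rfl
          · exact absurd hz List.not_mem_nil
      · obtain ⟨x, hxs, hxX, q', hq'⟩ := ih hyU hy' hw
        refine ⟨x, List.mem_cons_of_mem _ hxs, hxX, SimpleGraph.Walk.cons hadj q', ?_⟩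
        intro z hz
        rw [SimpleGraph.Walk.support_cons, List.mem_cons] at hz
        rcases hz with rfl | hz
        · exact Or.inr ⟨hu, hu'⟩
        · exact hq' z hz
    · exact absurd (umix hT hsep h hu (vpart_subset_uside htR hat)).2 hu'


/-- The `st`-side of the edge `e` contains few elements of `A₁` outside the adhesion set. -/
def Small (T : SimpleGraph ι) (𝒱 : ι → Set V) (A₁ : Set V) (k : ℕ) (s s' : ι) : Prop :=
  (A₁ ∩ (USide T 𝒱 s(s,s') s \ (𝒱 s ∩ 𝒱 s'))).encard < (k : ℕ∞)

include hT hsep hedge in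
lemma dich {k : ℕ} {A₁ : Set V} (hconn : KConnIn G k A₁)
    (hadh : ∀ t t' : ι, T.Adj t t' → (𝒱 t ∩ 𝒱 t').Finite ∧ (𝒱 t ∩ 𝒱 t').ncard < k)
    {s s' : ι} (h : T.Adj s s') :
    Small T 𝒱 A₁ k s s' ∨ Small T 𝒱 A₁ k s' s := by
  classical
  by_contra hno
  push_neg at hno
  obtain ⟨h1, h2⟩ := hno
  rw [Small, not_lt] at h1 h2
  rw [show s(s',s) = s(s,s') from Sym2.eq_swap, Set.inter_comm (𝒱 s') (𝒱 s)] at h2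
  obtain ⟨hXfin, hXk⟩ := hadh s s' h
  set X := 𝒱 s ∩ 𝒱 s' with hXdef
  set ℓ := X.ncard + 1 with hℓdef
  have hℓk : ℓ ≤ k := hXk
  have hc : (ℓ : ℕ∞) ≤ (k : ℕ∞) := by exact_mod_cast hℓk
  obtain ⟨Z1s, hZ1sub, hZ1card⟩ := Set.exists_subset_encard_eq (le_trans hc h1)
  obtain ⟨Z2s, hZ2sub, hZ2card⟩ := Set.exists_subset_encard_eq (le_trans hc h2)
  have hZ1fin : Z1s.Finite := Set.finite_of_encard_eq_coe hZ1card
  have hZ2fin : Z2s.Finite := Set.finite_of_encard_eq_coe hZ2card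
  have hcard1 : hZ1fin.toFinset.card = ℓ := by
    have := hZ1fin.encard_eq_coe_toFinset_card
    rw [hZ1card] at this
    exact_mod_cast this.symm
  have hcard2 : hZ2fin.toFinset.card = ℓ := by
    have := hZ2fin.encard_eq_coe_toFinset_card
    rw [hZ2card] at this
    exact_mod_cast this.symm
  have hsub1 : ↑hZ1fin.toFinset ⊆ A₁ := by
    rw [Set.Finite.coe_toFinset]
    exact hZ1sub.trans Set.inter_subset_left
  have hsub2 : ↑hZ2fin.toFinset ⊆ A₁ := by
    rw [Set.Finite.coe_toFinset]
    exact hZ2sub.trans Set.inter_subset_left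
  obtain ⟨af, bf, pf, haf, hbf, -, -, hdisj⟩ :=
    hconn ℓ hℓk hZ1fin.toFinset hZ2fin.toFinset hsub1 hsub2 hcard1 hcard2
  have hx : ∀ i : Fin ℓ, ∃ x ∈ (pf i).support, x ∈ X := by
    intro i
    have hai : af i ∈ Z1s := by
      have := haf i; rwa [Set.Finite.coe_toFinset] at this
    have hbi : bf i ∈ Z2s := by
      have := hbf i; rwa [Set.Finite.coe_toFinset] at this
    have haiU : af i ∈ USide T 𝒱 s(s,s') s := ((hZ1sub hai).2).1
    have hbiU : bf i ∉ USide T 𝒱 s(s,s') s := by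
      intro hmem
      exact ((hZ2sub hbi).2).2 (umix hT hsep h hmem ((hZ2sub hbi).2).1)
    exact ucross hT hsep hedge h (pf i) haiU hbiU
  choose x hxsup hxX using hx
  have hxinj : Function.Injective x := by
    intro i j hij
    by_contra hne
    exact hdisj i j hne (x i) (hxsup i) (hij ▸ hxsup j)
  have himg : (Finset.univ.image x) ⊆ hXfin.toFinset := by
    intro y hy
    obtain ⟨i, -, rfl⟩ := Finset.mem_image.mp hy
    rw [Set.Finite.mem_toFinset]
    exact hxX i
  have hcard : (Finset.univ.image x).card = ℓ := by
    rw [Finset.card_image_of_injective _ hxinj, Finset.card_univ, Fintype.card_fin]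
  have : ℓ ≤ X.ncard := by
    have := Finset.card_le_card himg
    rwa [hcard, ← Set.ncard_eq_toFinset_card X hXfin] at this
  omega

include hT hsep hedge hcover in
lemma sink_exists {k : ℕ} {A₁ : Set V} (hconn : KConnIn G k A₁)
    (hadh : ∀ t t' : ι, T.Adj t t' → (𝒱 t ∩ 𝒱 t').Finite ∧ (𝒱 t ∩ 𝒱 t').ncard < k)
    (hinf : A₁.Infinite) :
    ∃ t0 : ι, ∀ s, T.Adj s t0 → Small T 𝒱 A₁ k s t0 := by
  classical
  by_contra hno
  push_neg at hno
  choose f hfadj hfns using hno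
  have hfS : ∀ t, Small T 𝒱 A₁ k t (f t) := fun t =>
    (dich hT hsep hedge hconn hadh (hfadj t)).resolve_left (hfns t)
  have hne : Nonempty ι := hT.1.nonempty
  let t0 : ι := Classical.choice hne
  let tseq : ℕ → ι := fun n => Nat.recAux t0 (fun _ t => f t) n
  have hts : ∀ n, tseq (n+1) = f (tseq n) := fun n => rfl
  have hadjn : ∀ n, T.Adj (tseq n) (tseq (n+1)) := fun n => (hfadj (tseq n)).symm
  have hSn : ∀ n, Small T 𝒱 A₁ k (tseq n) (tseq (n+1)) := fun n => hfS (tseq n)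
  have hnb : ∀ n, tseq (n+2) ≠ tseq n := by
    intro n he
    apply hfns (tseq (n+1))
    show Small T 𝒱 A₁ k (tseq (n+2)) (tseq (n+1))
    rw [he]
    exact hSn n
  have hEne : ∀ n, s(tseq n, tseq (n+1)) ≠ s(tseq (n+1), tseq (n+2)) := by
    intro n he
    rw [Sym2.eq_iff] at he
    rcases he with ⟨he1, -⟩ | ⟨he1, -⟩
    · exact (hadjn n).ne he1
    · exact hnb n he1.symm
  have hmono : ∀ n, sideCl T s(tseq n, tseq (n+1)) (tseq n) ⊆
      sideCl T s(tseq (n+1), tseq (n+2)) (tseq (n+1)) := by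
    intro n t ht
    obtain ⟨w⟩ := ht
    have hnsup : tseq (n+1) ∉ w.support := by
      intro hsup
      exact not_reach hT (hadjn n) (SimpleGraph.Reachable.symm ⟨w.dropUntil _ hsup⟩)
    have hedges : ∀ e ∈ w.edges, e ∈ (T.deleteEdges {s(tseq (n+1), tseq (n+2))}).edgeSet := by
      intro e hew
      have heT := w.edges_subset_edgeSet hew
      rw [SimpleGraph.edgeSet_deleteEdges] at heT
      rw [SimpleGraph.edgeSet_deleteEdges]
      refine ⟨heT.1, ?_⟩
      intro hmem
      rw [Set.mem_singleton_iff] at hmem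
      subst hmem
      exact hnsup (w.fst_mem_support_of_mem_edges hew)
    have hadj' : (T.deleteEdges {s(tseq (n+1), tseq (n+2))}).Adj (tseq n) (tseq (n+1)) :=
      SimpleGraph.deleteEdges_adj.mpr ⟨hadjn n, by simpa using hEne n⟩
    exact ⟨(w.transfer _ hedges).append (SimpleGraph.Walk.cons hadj' SimpleGraph.Walk.nil)⟩
  have hcov : ∀ s : ι, ∃ n, s ∈ sideCl T s(tseq n, tseq (n+1)) (tseq n) := by
    intro s
    by_contra hnos
    push_neg at hnos
    have hR : ∀ n, s ∈ sideCl T s(tseq n, tseq (n+1)) (tseq (n+1)) :=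
      fun n => (sideCl_classify hT (hadjn n) s).resolve_left (hnos n)
    have hdec : ∀ n, T.dist s (tseq (n+1)) < T.dist s (tseq n) := by
      intro n
      have hsne : s ≠ tseq n := fun he => hnos n (he ▸ SimpleGraph.Reachable.refl _)
      have hreach : T.Reachable s (tseq n) := hT.1 s _
      have hpos : 0 < T.dist s (tseq n) := hreach.pos_dist_of_ne hsne
      obtain ⟨p, hp⟩ := hreach.exists_walk_length_eq_dist
      have hcrr : s(tseq n, tseq (n+1)) ∈ p.reverse.edges :=
        walk_crosses hT (hadjn n) (SimpleGraph.Reachable.refl _) (hR n) p.reverse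
      have hcr : s(tseq n, tseq (n+1)) ∈ p.edges := by
        rwa [SimpleGraph.Walk.edges_reverse, List.mem_reverse] at hcrr
      have hsup : tseq (n+1) ∈ p.support := p.snd_mem_support_of_mem_edges hcr
      have hd1 : T.dist s (tseq (n+1)) ≤ (p.takeUntil _ hsup).length :=
        SimpleGraph.dist_le _
      have hlen : (p.takeUntil _ hsup).length + (p.dropUntil _ hsup).length = p.length := by
        rw [← SimpleGraph.Walk.length_append, SimpleGraph.Walk.take_spec]
      have hd2 : (p.dropUntil _ hsup).length ≠ 0 := by
        intro h0
        exact (hadjn n).ne' (SimpleGraph.Walk.eq_of_length_eq_zero h0)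
      omega
    have hmain : ∀ n, T.dist s (tseq n) + n ≤ T.dist s (tseq 0) := by
      intro n
      induction n with
      | zero => omega
      | succ m ih => have := hdec m; omega
    have := hmain (T.dist s (tseq 0) + 1)
    omega
  have humono : ∀ m n, m ≤ n → USide T 𝒱 s(tseq m, tseq (m+1)) (tseq m) ⊆
      USide T 𝒱 s(tseq n, tseq (n+1)) (tseq n) := by
    intro m n hmn
    induction hmn with
    | refl => exact subset_rfl
    | @step p hmp ih =>
      refine ih.trans ?_
      intro x hx
      obtain ⟨t, htc, hxt⟩ := mem_USide.mp hx
      exact mem_USide.mpr ⟨t, hmono p htc, hxt⟩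
  have hbnd : ∀ n, (A₁ ∩ USide T 𝒱 s(tseq n, tseq (n+1)) (tseq n)).encard ≤ ((2*k : ℕ) : ℕ∞) := by
    intro n
    have h1 : (A₁ ∩ (USide T 𝒱 s(tseq n, tseq (n+1)) (tseq n) \
        (𝒱 (tseq n) ∩ 𝒱 (tseq (n+1))))).encard ≤ (k : ℕ∞) := le_of_lt (hSn n)
    obtain ⟨hXfin, hXk⟩ := hadh _ _ (hadjn n)
    have hXe : (𝒱 (tseq n) ∩ 𝒱 (tseq (n+1))).encard ≤ (k : ℕ∞) := by
      rw [hXfin.encard_eq_coe_toFinset_card]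
      have := Set.ncard_eq_toFinset_card _ hXfin
      exact_mod_cast Nat.cast_le.mpr (by omega : hXfin.toFinset.card ≤ k)
    have hsub : A₁ ∩ USide T 𝒱 s(tseq n, tseq (n+1)) (tseq n) ⊆
        (A₁ ∩ (USide T 𝒱 s(tseq n, tseq (n+1)) (tseq n) \
          (𝒱 (tseq n) ∩ 𝒱 (tseq (n+1))))) ∪ (𝒱 (tseq n) ∩ 𝒱 (tseq (n+1))) := by
      intro x hx
      by_cases hxX : x ∈ 𝒱 (tseq n) ∩ 𝒱 (tseq (n+1))
      · exact Or.inr hxX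
      · exact Or.inl ⟨hx.1, hx.2, hxX⟩
    calc (A₁ ∩ USide T 𝒱 s(tseq n, tseq (n+1)) (tseq n)).encard
        ≤ _ := Set.encard_le_encard hsub
      _ ≤ _ + _ := Set.encard_union_le _ _
      _ ≤ (k : ℕ∞) + (k : ℕ∞) := add_le_add h1 hXe
      _ = ((2*k : ℕ) : ℕ∞) := by push_cast; ring
  obtain ⟨F, hFsub, hFcard⟩ := hinf.exists_subset_card_eq (2*k+1)
  have hxn : ∀ x ∈ F, ∃ n, x ∈ USide T 𝒱 s(tseq n, tseq (n+1)) (tseq n) := by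
    intro x _
    obtain ⟨t, ht⟩ := hcover x
    obtain ⟨n, hn⟩ := hcov t
    exact ⟨n, mem_USide.mpr ⟨t, hn, ht⟩⟩
  choose! nfun hnfun using hxn
  set N := F.sup nfun with hN
  have hFN : ↑F ⊆ A₁ ∩ USide T 𝒱 s(tseq N, tseq (N+1)) (tseq N) := by
    intro x hx
    have hxF : x ∈ F := hx
    exact ⟨hFsub hx, humono (nfun x) N (Finset.le_sup hxF) (hnfun x hxF)⟩
  have hcontr : ((2*k+1 : ℕ) : ℕ∞) ≤ ((2*k : ℕ) : ℕ∞) := by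
    calc ((2*k+1 : ℕ) : ℕ∞) = (↑F : Set V).encard := by
          rw [Set.encard_coe_eq_coe_finsetCard, hFcard]
      _ ≤ _ := Set.encard_le_encard hFN
      _ ≤ _ := hbnd N
  have : (2*k+1 : ℕ) ≤ 2*k := by exact_mod_cast hcontr
  omega

lemma small_iff {k : ℕ} {A₁ : Set V} {s s' : ι} :
    Small T 𝒱 A₁ k s s' ↔
      (A₁ ∩ (USide T 𝒱 s(s,s') s \ (𝒱 s ∩ 𝒱 s'))).encard < (k : ℕ∞) := Iff.rfl

include hT hsep in
/-- Membership in two distinct branches around `t0` forces membership in `𝒱 t0`. -/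
lemma wdisj {t0 s s' : ι} (hs : T.Adj s t0) (hs' : T.Adj s' t0) (hne : s ≠ s') {x : V}
    (h1 : x ∈ USide T 𝒱 s(s,t0) s) (h2 : x ∈ USide T 𝒱 s(s',t0) s') : x ∈ 𝒱 t0 := by
  classical
  obtain ⟨a, haC, hxa⟩ := mem_USide.mp h1
  obtain ⟨b, hbC, hxb⟩ := mem_USide.mp h2
  have hbR : b ∈ sideCl T s(s,t0) t0 := by
    obtain ⟨w⟩ := hbC
    have hsupp : t0 ∉ w.support := fun hsup =>
      not_reach hT hs' (SimpleGraph.Reachable.symm ⟨w.dropUntil _ hsup⟩)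
    have hedges : ∀ e ∈ w.edges, e ∈ (T.deleteEdges {s(s,t0)}).edgeSet := by
      intro e hew
      have heT := w.edges_subset_edgeSet hew
      rw [SimpleGraph.edgeSet_deleteEdges] at heT ⊢
      refine ⟨heT.1, ?_⟩
      intro hmem
      rw [Set.mem_singleton_iff] at hmem
      subst hmem
      exact hsupp (w.snd_mem_support_of_mem_edges hew)
    have hadj0 : (T.deleteEdges {s(s,t0)}).Adj s' t0 := by
      refine SimpleGraph.deleteEdges_adj.mpr ⟨hs', ?_⟩
      simp only [Set.mem_singleton_iff, Sym2.eq_iff]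
      rintro (⟨h1', -⟩ | ⟨h1', -⟩)
      · exact hne h1'.symm
      · exact hs'.ne h1'
    exact ⟨(w.transfer _ hedges).append (SimpleGraph.Walk.cons hadj0 SimpleGraph.Walk.nil)⟩
  exact (vsep hT hsep hs haC hbR ⟨hxa, hxb⟩).2

/-- Every node other than `t0` lies in the branch of some neighbour of `t0`. -/
lemma nbr (hT : T.IsTree) {t0 t u : ι} (w : T.Walk t u) (hu : u = t0) (ht : t ≠ t0) :
    ∃ s, T.Adj s t0 ∧ t ∈ sideCl T s(s,t0) s := by
  induction w with
  | nil => exact absurd hu ht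
  | @cons a y c hadj q ih =>
    by_cases hy : y = t0
    · subst hy; subst hu
      exact ⟨a, hadj, SimpleGraph.Reachable.refl _⟩
    · obtain ⟨s, hs, hyC⟩ := ih hu hy
      refine ⟨s, hs, SimpleGraph.Reachable.trans ⟨SimpleGraph.Walk.cons ?_ SimpleGraph.Walk.nil⟩ hyC⟩
      refine SimpleGraph.deleteEdges_adj.mpr ⟨hadj, ?_⟩
      simp only [Set.mem_singleton_iff, Sym2.eq_iff]
      rintro (⟨-, h2'⟩ | ⟨h1', -⟩)
      · exact hy h2'
      · exact ht h1'

end Decomp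

lemma some_congr {α : Type*} {s t : Set α} (hs : s.Nonempty) (ht : t.Nonempty) (h : s = t) :
    hs.some = ht.some := by subst h; rfl

lemma mul_small {κ c d : Cardinal.{u}} (hκ : Cardinal.aleph0 ≤ κ) (hc : c < κ)
    (hd : d < Cardinal.aleph0) : c * d < κ := by
  rcases lt_or_ge c Cardinal.aleph0 with h | h
  · exact lt_of_lt_of_le (Cardinal.mul_lt_aleph0 h hd) hκ
  · calc c * d ≤ max (max c d) Cardinal.aleph0 := Cardinal.mul_le_max c d
      _ = c := by
          rw [max_eq_left (le_of_lt (lt_of_lt_of_le hd h)), max_eq_left h]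
      _ < κ := hc

lemma mk_le_of_encard_lt {s : Set V} {k : ℕ} (h : s.encard < (k : ℕ∞)) :
    Cardinal.mk s ≤ (k : Cardinal.{u}) := by
  have hfin : s.Finite := Set.encard_lt_top_iff.mp (lt_of_lt_of_le h le_top)
  have hcard : (hfin.toFinset.card : ℕ∞) < (k : ℕ∞) := by
    rw [← hfin.encard_eq_coe_toFinset_card]; exact h
  have hcard' : hfin.toFinset.card ≤ k := le_of_lt (by exact_mod_cast hcard)
  calc Cardinal.mk s = Cardinal.mk (↑hfin.toFinset : Set V) := by rw [hfin.coe_toFinset]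
    _ = hfin.toFinset.card := Cardinal.mk_coe_finset
    _ ≤ (k : Cardinal.{u}) := by exact_mod_cast hcard'

end PNSaux

open PNSaux

/-- If some `A₁ ⊆ A` of size `κ` is `k`-connected in `G`, then every
tree-decomposition of `G` of adhesion less than `k` has a part that cannot be
separated from `A` by fewer than `κ` vertices. -/
theorem part_not_separable_of_kconn {ι : Type v}
    (G : SimpleGraph V) (k : ℕ) (A : Set V) (hA : A.Infinite)
    (κ : Cardinal.{u}) (hκ : Cardinal.aleph0 ≤ κ) (hκA : κ ≤ Cardinal.mk A)
    (h1 : ∃ A₁ ⊆ A, Cardinal.mk A₁ = κ ∧ KConnIn G k A₁)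
    (T : SimpleGraph ι) (hT : T.IsTree) (𝒱 : ι → Set V)
    (hcover : ∀ x : V, ∃ t, x ∈ 𝒱 t)
    (hedge : ∀ a b : V, G.Adj a b → ∃ t, a ∈ 𝒱 t ∧ b ∈ 𝒱 t)
    (hsep : ∀ t₁ t₂ t₃ : ι,
      (∃ p : T.Walk t₁ t₃, p.IsPath ∧ t₂ ∈ p.support) → 𝒱 t₁ ∩ 𝒱 t₃ ⊆ 𝒱 t₂)
    (hadh : ∀ t t' : ι, T.Adj t t' →
      (𝒱 t ∩ 𝒱 t').Finite ∧ (𝒱 t ∩ 𝒱 t').ncard < k) :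
    ∃ t : ι, ¬ ∃ S : Set V, Cardinal.mk S < κ ∧
      ∀ a ∈ A, ∀ b ∈ 𝒱 t, ∀ p : G.Walk a b, ∃ x ∈ p.support, x ∈ S := by
  classical
  by_contra hcon
  push_neg at hcon
  obtain ⟨A₁, hA₁A, hA₁κ, hconn⟩ := h1
  have hA₁inf : A₁.Infinite := by
    rw [← Set.infinite_coe_iff]
    exact Cardinal.infinite_iff.mpr (hA₁κ ▸ hκ)
  obtain ⟨t0, hsink⟩ := sink_exists hT hsep hedge hcover hconn hadh hA₁inf
  obtain ⟨S, hSκ, hSsep⟩ := hcon t0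
  set A₂ : Set V := A₁ \ S with hA₂def
  have hA₂A₁ : A₂ ⊆ A₁ := Set.diff_subset
  have hA₂t0 : ∀ a ∈ A₂, a ∉ 𝒱 t0 := by
    intro a ha hat
    obtain ⟨x, hxs, hxS⟩ := hSsep a (hA₁A ha.1) a hat SimpleGraph.Walk.nil
    rw [SimpleGraph.Walk.support_nil, List.mem_singleton] at hxs
    subst hxs
    exact ha.2 hxS
  have hκA₂ : κ ≤ Cardinal.mk A₂ := by
    by_contra hlt
    push_neg at hlt
    have heq : Cardinal.mk A₁ = Cardinal.mk ↥((A₁ ∩ S) ∪ (A₁ \ S)) := by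
      rw [Set.inter_union_diff]
    have hle : Cardinal.mk A₁ ≤ Cardinal.mk ↥(A₁ ∩ S) + Cardinal.mk ↥(A₁ \ S) :=
      heq ▸ Cardinal.mk_union_le _ _
    have h1' : Cardinal.mk ↥(A₁ ∩ S) < κ :=
      lt_of_le_of_lt (Cardinal.mk_le_mk_of_subset Set.inter_subset_right) hSκ
    have : Cardinal.mk A₁ < κ := lt_of_le_of_lt hle (Cardinal.add_lt_of_lt hκ h1' hlt)
    rw [hA₁κ] at this
    exact lt_irrefl _ this
  have hA₂inf : A₂.Infinite :=
    Set.infinite_coe_iff.mp (Cardinal.infinite_iff.mpr (le_trans hκ hκA₂))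
  -- branch of each element of A₂
  have hbrex : ∀ a : ↥A₂, ∃ s, T.Adj s t0 ∧ (a : V) ∈ USide T 𝒱 s(s,t0) s := by
    intro a
    obtain ⟨t, ht⟩ := hcover (a : V)
    have htne : t ≠ t0 := fun he => hA₂t0 a a.2 (he ▸ ht)
    obtain ⟨w⟩ := hT.1 t t0
    obtain ⟨s, hs, hC⟩ := nbr hT w rfl htne
    exact ⟨s, hs, mem_USide.mpr ⟨t, hC, ht⟩⟩
  choose br hbadj hbU using hbrex
  let WB : ι → Set V := fun s => USide T 𝒱 s(s,t0) s \ 𝒱 t0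
  have hWBmem : ∀ (s : ι) (x : V), x ∈ WB s ↔ x ∈ USide T 𝒱 s(s,t0) s ∧ x ∉ 𝒱 t0 :=
    fun s x => Iff.rfl
  have hWB : ∀ a : ↥A₂, (a : V) ∈ WB (br a) := fun a => ⟨hbU a, hA₂t0 a a.2⟩
  have hWdisj : ∀ {s s'}, T.Adj s t0 → T.Adj s' t0 → ∀ {x : V}, x ∈ WB s → x ∈ WB s' →
      s = s' := by
    intro s s' hs hs' x h1x h2x
    by_contra hne
    exact h1x.2 (wdisj hT hsep hs hs' hne h1x.1 h2x.1)
  have hbne : ∀ a : ↥A₂, (A₂ ∩ WB (br a)).Nonempty := fun a => ⟨a, a.2, hWB a⟩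
  let φ : ↥A₂ → V := fun a => (hbne a).some
  have hφmem : ∀ a, φ a ∈ A₂ ∩ WB (br a) := fun a => (hbne a).some_mem
  have hφbr : ∀ a b : ↥A₂, br a = br b → φ a = φ b := fun a b h =>
    some_congr _ _ (by rw [h])
  have hbr_unique : ∀ (a : ↥A₂) {s}, T.Adj s t0 → (a : V) ∈ WB s → br a = s :=
    fun a s hs hmem => hWdisj (hbadj a) hs (hWB a) hmem
  have hφbr' : ∀ a b : ↥A₂, φ a = φ b → br a = br b := by
    intro a b h
    have h1x := (hφmem a).2
    have h2x := (hφmem b).2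
    rw [h] at h1x
    exact hWdisj (hbadj a) (hbadj b) h1x h2x
  let R : Set V := Set.range φ
  have hRA₂ : R ⊆ A₂ := by rintro r ⟨a, rfl⟩; exact (hφmem a).1
  let brOf : V → ι := fun r => if h : r ∈ A₂ then br ⟨r, h⟩ else t0
  have hbrOfφ : ∀ a : ↥A₂, brOf (φ a) = br a := by
    intro a
    have h := (hφmem a).1
    show (if h' : φ a ∈ A₂ then br ⟨φ a, h'⟩ else t0) = br a
    rw [dif_pos h]
    exact hbr_unique ⟨φ a, h⟩ (hbadj a) (hφmem a).2
  have hRadj : ∀ r ∈ R, T.Adj (brOf r) t0 := by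
    rintro r ⟨a, rfl⟩; rw [hbrOfφ]; exact hbadj a
  have hRW : ∀ r ∈ R, r ∈ WB (brOf r) := by
    rintro r ⟨a, rfl⟩; rw [hbrOfφ]; exact (hφmem a).2
  have hRinj : ∀ r ∈ R, ∀ r' ∈ R, brOf r = brOf r' → r = r' := by
    rintro r ⟨a, rfl⟩ r' ⟨a', rfl⟩ h
    rw [hbrOfφ, hbrOfφ] at h
    exact hφbr a a' h
  have hksmall : ∀ s, T.Adj s t0 → (A₂ ∩ WB s).encard < (k : ℕ∞) := by
    intro s hs
    refine lt_of_le_of_lt (Set.encard_le_encard ?_) (small_iff.mp (hsink s hs))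
    intro x hx
    exact ⟨hA₂A₁ hx.1, hx.2.1, fun hX => hx.2.2 hX.2⟩
  have hA₂WBfin : ∀ r, T.Adj (brOf r) t0 → (A₂ ∩ WB (brOf r)).Finite := fun r hr =>
    Set.encard_lt_top_iff.mp (lt_of_lt_of_le (hksmall _ hr) le_top)
  have hκR : κ ≤ Cardinal.mk R := by
    by_contra hlt
    push_neg at hlt
    have hsub : A₂ ⊆ ⋃ (r : ↥R), (A₂ ∩ WB (brOf (r : V))) := by
      intro a ha
      have hmem : φ ⟨a, ha⟩ ∈ R := Set.mem_range_self _
      refine Set.mem_iUnion.mpr ⟨⟨φ ⟨a, ha⟩, hmem⟩, ha, ?_⟩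
      rw [hbrOfφ]
      exact hWB ⟨a, ha⟩
    have hbound : Cardinal.mk ↥(⋃ (r : ↥R), (A₂ ∩ WB (brOf (r : V)))) ≤
        Cardinal.mk ↥R * (k : Cardinal.{u}) := by
      refine le_trans (Cardinal.mk_iUnion_le _) (mul_le_mul_right (ciSup_le' ?_) _)
      intro r
      exact mk_le_of_encard_lt (hksmall _ (hRadj r r.2))
    have : Cardinal.mk A₂ < κ :=
      lt_of_le_of_lt (le_trans (Cardinal.mk_le_mk_of_subset hsub) hbound)
        (mul_small hκ hlt (Cardinal.nat_lt_aleph0 k))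
    exact absurd hκA₂ (not_le.mpr this)
  let R1 : Set V := {r ∈ R | (S ∩ WB (brOf r)).Nonempty}
  let R2 : Set V := R \ R1
  have hR2R : R2 ⊆ R := Set.diff_subset
  have hR1S : Cardinal.mk R1 ≤ Cardinal.mk S := by
    have hresx : ∀ r : ↥R1, ∃ x, x ∈ S ∧ x ∈ WB (brOf (r : V)) := by
      intro r
      obtain ⟨x, hx1, hx2⟩ := r.2.2
      exact ⟨x, hx1, hx2⟩
    choose χ hχS hχW using hresx
    refine Cardinal.mk_le_of_injective (f := fun r : ↥R1 => (⟨χ r, hχS r⟩ : ↥S)) ?_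
    intro r r' h
    have hval : χ r = χ r' := congrArg Subtype.val h
    have hbre : brOf (r : V) = brOf (r' : V) :=
      hWdisj (hRadj _ r.2.1) (hRadj _ r'.2.1) (hχW r) (hval ▸ hχW r')
    exact Subtype.ext (hRinj _ r.2.1 _ r'.2.1 hbre)
  have hκR2 : κ ≤ Cardinal.mk R2 := by
    by_contra hlt
    push_neg at hlt
    have heq : Cardinal.mk R = Cardinal.mk ↥(R1 ∪ (R \ R1)) := by
      rw [Set.union_diff_cancel (Set.sep_subset _ _)]
    have hle : Cardinal.mk R ≤ Cardinal.mk ↥R1 + Cardinal.mk ↥R2 :=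
      heq ▸ Cardinal.mk_union_le _ _
    have : Cardinal.mk R < κ :=
      lt_of_le_of_lt hle (Cardinal.add_lt_of_lt hκ (lt_of_le_of_lt hR1S hSκ) hlt)
    exact absurd hκR (not_le.mpr this)
  have hR2prop : ∀ r ∈ R2, S ∩ WB (brOf r) = ∅ := by
    intro r hr
    by_contra hne
    exact hr.2 ⟨hr.1, Set.nonempty_iff_ne_empty.mpr hne⟩
  have hR2ne : R2.Nonempty := by
    have hpos : (0 : Cardinal.{u}) < Cardinal.mk R2 :=
      lt_of_lt_of_le (lt_of_lt_of_le Cardinal.aleph0_pos hκ) hκR2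
    obtain ⟨r⟩ := Cardinal.mk_ne_zero_iff.mp (ne_of_gt hpos)
    exact ⟨r, r.2⟩
  have hk1 : 1 ≤ k := by
    obtain ⟨r, hr⟩ := hR2ne
    have := (hadh _ _ (hRadj r (hR2R hr))).2
    omega
  have hkey : ∀ r ∈ R2, ∀ (b : V), b ∈ A₂ → b ∉ WB (brOf r) → ∀ (p : G.Walk r b),
      ∃ x ∈ p.support, x ∈ S ∧ x ∈ 𝒱 (brOf r) ∩ 𝒱 t0 := by
    intro r hr b hb hbW p
    have hadjr := hRadj r (hR2R hr)
    have hrW := hRW r (hR2R hr)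
    have hbUn : b ∉ USide T 𝒱 s(brOf r, t0) (brOf r) := fun hU => hbW ⟨hU, hA₂t0 b hb⟩
    obtain ⟨x, hxsup, hxX, q, hq⟩ := firstexit hT hsep hedge hadjr p hrW.1 hrW.2 hbUn
    obtain ⟨z, hzsup, hzS⟩ := hSsep r (hA₁A (hA₂A₁ (hRA₂ (hR2R hr)))) x hxX.2 q
    rcases hq z hzsup with rfl | hzW
    · exact ⟨z, hxsup, hzS, hxX⟩
    · exfalso
      have hmem : z ∈ S ∩ WB (brOf r) := ⟨hzS, hzW.1, hzW.2⟩
      rw [hR2prop r hr] at hmem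
      exact hmem
  have hbex : ∀ r ∈ R2, ∃ b, b ∈ A₂ ∧ b ∉ WB (brOf r) := by
    intro r hr
    obtain ⟨b, hb⟩ := (hA₂inf.diff (hA₂WBfin r (hRadj r (hR2R hr)))).nonempty
    exact ⟨b, hb.1, fun hW => hb.2 ⟨hb.1, hW⟩⟩
  have hwalk : ∀ (r b : V), r ∈ A₂ → b ∈ A₂ → Nonempty (G.Walk r b) := by
    intro r b hr hb
    obtain ⟨af, bf, pf, haf, hbf, -, -, -⟩ := hconn 1 hk1 {r} {b}
      (by simp [hA₂A₁ hr]) (by simp [hA₂A₁ hb]) (Finset.card_singleton r)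
      (Finset.card_singleton b)
    have h0a : af 0 = r := by have := haf 0; simpa using this
    have h0b : bf 0 = b := by have := hbf 0; simpa using this
    exact ⟨(pf 0).copy h0a h0b⟩
  let gv : V → Finset V := fun r =>
    if h : (S ∩ (𝒱 (brOf r) ∩ 𝒱 t0)).Finite then h.toFinset else ∅
  have hgveq : ∀ r ∈ R2, ∀ (hf : (S ∩ (𝒱 (brOf r) ∩ 𝒱 t0)).Finite), gv r = hf.toFinset := by
    intro r hr hf
    show (if h : (S ∩ (𝒱 (brOf r) ∩ 𝒱 t0)).Finite then h.toFinset else ∅) = hf.toFinset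
    rw [dif_pos hf]
  have hXfinR : ∀ r ∈ R2, (S ∩ (𝒱 (brOf r) ∩ 𝒱 t0)).Finite := fun r hr =>
    ((hadh _ _ (hRadj r (hR2R hr))).1).subset Set.inter_subset_right
  have hgv : ∀ r ∈ R2, (↑(gv r) : Set V) = S ∩ (𝒱 (brOf r) ∩ 𝒱 t0) := by
    intro r hr
    rw [hgveq r hr (hXfinR r hr), Set.Finite.coe_toFinset]
  have hgvcard : ∀ r ∈ R2, (gv r).card < k := by
    intro r hr
    have hXfin := (hadh _ _ (hRadj r (hR2R hr))).1
    rw [hgveq r hr (hXfinR r hr), ← Set.ncard_eq_toFinset_card _ (hXfinR r hr)]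
    exact lt_of_le_of_lt (Set.ncard_le_ncard Set.inter_subset_right hXfin)
      (hadh _ _ (hRadj r (hR2R hr))).2
  have hgvne : ∀ r ∈ R2, (gv r).Nonempty := by
    intro r hr
    obtain ⟨b, hbA, hbW⟩ := hbex r hr
    obtain ⟨p⟩ := hwalk r b (hRA₂ (hR2R hr)) hbA
    obtain ⟨x, -, hxS, hxX⟩ := hkey r hr b hbA hbW p
    refine ⟨x, ?_⟩
    rw [← Finset.mem_coe, hgv r hr]
    exact ⟨hxS, hxX⟩
  let 𝒮 : Set (Finset V) := {F | ↑F ⊆ S}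
  have h𝒮 : Cardinal.mk ↥𝒮 < κ := by
    rcases Set.finite_or_infinite S with hSfin | hSinf
    · have hsub : 𝒮 ⊆ ↑(hSfin.toFinset.powerset) := by
        intro F hF
        rw [Finset.mem_coe, Finset.mem_powerset]
        intro x hx
        rw [Set.Finite.mem_toFinset]
        exact hF hx
      have hfin : 𝒮.Finite := (hSfin.toFinset.powerset).finite_toSet.subset hsub
      exact lt_of_lt_of_le hfin.lt_aleph0 hκ
    · have hjinj : ∃ j : ↥𝒮 → List ↥S, Function.Injective j := by
        refine ⟨fun F => F.1.toList.attach.map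
          (fun (x : {y // y ∈ F.1.toList}) =>
            (⟨(x : V), F.2 (Finset.mem_coe.mpr (Finset.mem_toList.mp x.2))⟩ : ↥S)), ?_⟩
        intro F F' h
        have hval : F.1.toList = F'.1.toList := by
          have h2 := congrArg (List.map (fun y : ↥S => (y : V))) h
          simpa [List.map_map, Function.comp, List.attach_map_val] using h2
        exact Subtype.ext (Finset.ext fun a => by
          rw [← Finset.mem_toList, hval, Finset.mem_toList])
      obtain ⟨j, hj⟩ := hjinj
      have hSinf' : Cardinal.aleph0 ≤ Cardinal.mk S :=
        Cardinal.infinite_iff.mp hSinf.to_subtype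
      calc Cardinal.mk ↥𝒮 ≤ Cardinal.mk (List ↥S) := Cardinal.mk_le_of_injective hj
        _ ≤ Cardinal.aleph0 ⊔ Cardinal.mk ↥S := Cardinal.mk_list_le_max _
        _ = Cardinal.mk ↥S := max_eq_right hSinf'
        _ < κ := hSκ
  let fib : Finset V → Set V := fun F => {r | r ∈ R2 ∧ gv r = F}
  have hfibex : ∃ F : Finset V, ¬ ((fib F).encard < (k : ℕ∞)) := by
    by_contra hall
    push_neg at hall
    have hsub : R2 ⊆ ⋃ (F : ↥𝒮), fib (F : Finset V) := by
      intro r hr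
      have hmem𝒮 : gv r ∈ 𝒮 := by
        show (↑(gv r) : Set V) ⊆ S
        rw [hgv r hr]
        exact Set.inter_subset_left
      exact Set.mem_iUnion.mpr ⟨⟨gv r, hmem𝒮⟩, hr, rfl⟩
    have hbound : Cardinal.mk ↥(⋃ (F : ↥𝒮), fib (F : Finset V)) ≤
        Cardinal.mk ↥𝒮 * (k : Cardinal.{u}) := by
      refine le_trans (Cardinal.mk_iUnion_le _) (mul_le_mul_right (ciSup_le' ?_) _)
      intro F
      exact mk_le_of_encard_lt (hall (F : Finset V))
    have : Cardinal.mk R2 < κ :=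
      lt_of_le_of_lt (le_trans (Cardinal.mk_le_mk_of_subset hsub) hbound)
        (mul_small hκ h𝒮 (Cardinal.nat_lt_aleph0 k))
    exact absurd hκR2 (not_le.mpr this)
  obtain ⟨F0, hF0⟩ := hfibex
  rw [not_lt] at hF0
  obtain ⟨P, hPsub, hPcard⟩ := Set.exists_subset_encard_eq hF0
  have hPfin : P.Finite := Set.finite_of_encard_eq_coe hPcard
  have hPcard' : hPfin.toFinset.card = k := by
    have := hPfin.encard_eq_coe_toFinset_card
    rw [hPcard] at this
    exact_mod_cast this.symm
  have hPne : P.Nonempty := by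
    rw [← Set.encard_ne_zero, hPcard]
    exact_mod_cast (by omega : k ≠ 0)
  obtain ⟨r0, hr0⟩ := hPne
  have hF0card : F0.card < k := by
    have := hgvcard r0 (hPsub hr0).1
    rwa [(hPsub hr0).2] at this
  set Z₁ := hPfin.toFinset with hZ₁def
  have hZ₁A₁ : ↑Z₁ ⊆ A₁ := by
    rw [hPfin.coe_toFinset]
    exact fun r hr => hA₂A₁ (hRA₂ (hR2R (hPsub hr).1))
  have hexfin : (A₂ ∩ ⋃ r ∈ Z₁, WB (brOf r)).Finite := by
    rw [Set.inter_iUnion₂]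
    refine Set.Finite.biUnion (Z₁.finite_toSet) ?_
    intro r hr
    have hrP : r ∈ P := hPfin.mem_toFinset.mp (Finset.mem_coe.mp hr)
    exact hA₂WBfin r (hRadj r (hR2R (hPsub hrP).1))
  obtain ⟨Z₂, hZ₂sub, hZ₂card⟩ := (hA₂inf.diff hexfin).exists_subset_card_eq k
  obtain ⟨af, bf, pf, haf, hbf, -, -, hdisj⟩ := hconn k le_rfl Z₁ Z₂ hZ₁A₁
    (fun b hb => hA₂A₁ (hZ₂sub hb).1) hPcard' hZ₂card
  have hafP : ∀ i, af i ∈ P := by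
    intro i
    have := haf i
    rwa [hPfin.coe_toFinset] at this
  have hx : ∀ i : Fin k, ∃ x ∈ (pf i).support, x ∈ F0 := by
    intro i
    have hri : af i ∈ R2 := (hPsub (hafP i)).1
    have hbi : bf i ∈ A₂ := (hZ₂sub (hbf i)).1
    have hbiW : bf i ∉ WB (brOf (af i)) := by
      intro hW
      refine (hZ₂sub (hbf i)).2 ⟨hbi, ?_⟩
      exact Set.mem_biUnion (hPfin.mem_toFinset.mpr (hafP i)) hW
    obtain ⟨x, hxsup, hxS, hxX⟩ := hkey (af i) hri (bf i) hbi hbiW (pf i)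
    have hmem : x ∈ (↑(gv (af i)) : Set V) := by
      rw [hgv _ hri]
      exact ⟨hxS, hxX⟩
    rw [(hPsub (hafP i)).2] at hmem
    exact ⟨x, hxsup, hmem⟩
  choose x hxsup hxF using hx
  have hxinj : Function.Injective x := by
    intro i j hij
    by_contra hne
    exact hdisj i j hne (x i) (hxsup i) (hij ▸ hxsup j)
  have hge : k ≤ F0.card := by
    have himg : Finset.univ.image x ⊆ F0 := by
      intro y hy
      obtain ⟨i, -, rfl⟩ := Finset.mem_image.mp hy
      exact hxF i
    have := Finset.card_le_card himg
    rwa [Finset.card_image_of_injective _ hxinj, Finset.card_univ, Fintype.card_fin] at this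
  omega
end

section
/- Let G be a graph, ω an end of G with dom(ω) finite, and let G′ := G − Dom(ω). Then ω↾G′ (the set of rays of ω contained in G′) is an end of G′, the degree of ω in G equals the degree of ω↾G′ in G′, and Dom_G(ω) = Dom_{G′}(ω↾G′) ∪ (Dom_G(ω) ∩ Dom(ω)); in particular the end ω↾G′ of G′ is undominated in G′. -/
open Set

universe u

variable {V : Type u}

/-- Ray equivalence in the induced subgraph `G − D`: for every finite `S` the
rays can be joined by a walk avoiding `S ∪ D`. -/
def RayEquivAvoid (G : SimpleGraph V) (D : Set V) (R R' : ℕ → V) : Prop :=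
  ∀ S : Set V, S.Finite →
    ∃ (m n : ℕ) (p : G.Walk (R m) (R' n)), ∀ v ∈ p.support, v ∉ S ∪ D

/-- `d` dominates (in `G − D`) the end of `G − D` represented by the ray `R₀`. -/
def DominatesAvoid (G : SimpleGraph V) (D : Set V) (R₀ : ℕ → V) (d : V) : Prop :=
  d ∉ D ∧ ∀ S : Set V, S.Finite → d ∉ S →
    ∃ (n : ℕ) (p : G.Walk d (R₀ n)), ∀ v ∈ p.support, v ∉ S ∪ D

/-- The degree in `G − D` of the end of `G − D` represented by `R₀`. -/
noncomputable def endDegreeAvoid (G : SimpleGraph V) (D : Set V)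
    (R₀ : ℕ → V) : Cardinal.{u} :=
  ⨆ s : {s : Set (ℕ → V) //
      (∀ R ∈ s, IsRay G R ∧ (∀ n, R n ∉ D) ∧ RayEquivAvoid G D R R₀) ∧
      s.Pairwise fun R R' => Disjoint (Set.range R) (Set.range R')},
    Cardinal.mk s.1

lemma eventually_notMem_of_injective {f : ℕ → V} (hf : Function.Injective f)
    {S : Set V} (hS : S.Finite) : ∃ N, ∀ n, N ≤ n → f n ∉ S := by
  have h : (f ⁻¹' S).Finite := hS.preimage hf.injOn
  obtain ⟨k, hk⟩ := h.bddAbove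
  refine ⟨k + 1, fun n hn hmem => ?_⟩
  have := hk hmem
  omega

/-- The index beyond which an injective ray avoids `D`. -/
noncomputable def shiftIdx (D : Set V) (R : ℕ → V) : ℕ :=
  sInf {k | ∀ n, k ≤ n → R n ∉ D}

lemma shiftIdx_spec {D : Set V} (hD : D.Finite) {R : ℕ → V}
    (hR : Function.Injective R) : ∀ n, shiftIdx D R ≤ n → R n ∉ D := by
  have hne : {k | ∀ n, k ≤ n → R n ∉ D}.Nonempty :=
    eventually_notMem_of_injective hR hD
  exact Nat.sInf_mem hne

/-- The tail of a ray, shifted past all vertices of `D`. -/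
noncomputable def tailRay (D : Set V) (R : ℕ → V) : ℕ → V :=
  fun n => R (n + shiftIdx D R)

/-- Let `ω` be an end of `G` with finitely many dominating vertices and let
`G' = G − Dom(ω)`. Then `ω↾G'` is an end of `G'` (it is non-empty, its rays are
pairwise equivalent in `G'`, and it is closed under equivalence in `G'`), the
degree of `ω` in `G` equals the degree of `ω↾G'` in `G'`,
`Dom_G(ω) = Dom_{G'}(ω↾G') ∪ (Dom_G(ω) ∩ Dom(ω))`, and in particular `ω↾G'` is
undominated in `G'`. -/
theorem end_restriction_to_undominated
    (G : SimpleGraph V) (ω₀ : ℕ → V) (hω : IsRay G ω₀)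
    (hfin : (DomSet G ω₀).Finite) :
    ∃ R₀ : ℕ → V, OmegaRay G ω₀ R₀ ∧ (∀ n, R₀ n ∉ DomSet G ω₀) ∧
      (∀ R : ℕ → V, OmegaRay G ω₀ R → (∀ n, R n ∉ DomSet G ω₀) →
        RayEquivAvoid G (DomSet G ω₀) R R₀) ∧
      (∀ R : ℕ → V, IsRay G R → (∀ n, R n ∉ DomSet G ω₀) →
        RayEquivAvoid G (DomSet G ω₀) R R₀ → RayEquiv G R ω₀) ∧
      endDegree G ω₀ = endDegreeAvoid G (DomSet G ω₀) R₀ ∧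
      DomSet G ω₀ =
        {d | DominatesAvoid G (DomSet G ω₀) R₀ d} ∪
          (DomSet G ω₀ ∩ DomSet G ω₀) ∧
      (∀ d : V, ¬ DominatesAvoid G (DomSet G ω₀) R₀ d) := by
  classical
  set D := DomSet G ω₀ with hDdef
  obtain ⟨N, hN⟩ := eventually_notMem_of_injective hω.1 hfin
  set R₀ : ℕ → V := fun n => ω₀ (n + N) with hR₀def
  -- key connecting lemma
  have key : ∀ (R : ℕ → V) (k : ℕ), RayEquiv G R ω₀ → ∀ S : Set V, S.Finite →
      ∃ (m n : ℕ) (p : G.Walk (R (m + k)) (ω₀ (n + N))),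
        ∀ v ∈ p.support, v ∉ S ∪ D := by
    intro R k hRe S hS
    have hF1 : (ω₀ '' {j | j < N}).Finite := (Set.finite_lt_nat N).image _
    have hF2 : (R '' {j | j < k}).Finite := (Set.finite_lt_nat k).image _
    obtain ⟨m, n, p, hp⟩ := hRe (S ∪ D ∪ ω₀ '' {j | j < N} ∪ R '' {j | j < k})
      (((hS.union hfin).union hF1).union hF2)
    have hm : k ≤ m := by
      by_contra h
      exact hp (R m) p.start_mem_support (Or.inr ⟨m, show m < k by omega, rfl⟩)
    have hn : N ≤ n := by
      by_contra h
      exact hp (ω₀ n) p.end_mem_support (Or.inl (Or.inr ⟨n, show n < N by omega, rfl⟩))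
    refine ⟨m - k, n - N, p.copy (by congr 1; omega) (by congr 1; omega),
      fun v hv hmem => ?_⟩
    rw [SimpleGraph.Walk.support_copy] at hv
    exact hp v hv (Or.inl (Or.inl hmem))
  have hrefl : RayEquiv G ω₀ ω₀ := by
    intro S hS
    obtain ⟨M, hM⟩ := eventually_notMem_of_injective hω.1 hS
    exact ⟨M, M, SimpleGraph.Walk.nil, by simp [hM M le_rfl]⟩
  have hR₀ray : IsRay G R₀ := by
    constructor
    · intro a b h
      have := hω.1 h
      omega
    · intro n
      have h : n + 1 + N = n + N + 1 := by omega
      show G.Adj (ω₀ (n + N)) (ω₀ (n + 1 + N))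
      rw [h]
      exact hω.2 (n + N)
  have hR₀equiv : RayEquiv G R₀ ω₀ := by
    intro S hS
    obtain ⟨m, n, p, hp⟩ := key ω₀ N hrefl S hS
    exact ⟨m, n + N, p, fun v hv hvS => hp v hv (Or.inl hvS)⟩
  have havoid : ∀ n, R₀ n ∉ D := fun n => hN (n + N) (Nat.le_add_left _ _)
  have claim1 : ∀ R : ℕ → V, OmegaRay G ω₀ R → (∀ n, R n ∉ D) →
      RayEquivAvoid G D R R₀ := by
    intro R hR _ S hS
    obtain ⟨m, n, p, hp⟩ := key R 0 hR.2 S hS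
    exact ⟨m + 0, n, p, hp⟩
  have claim2 : ∀ R : ℕ → V, IsRay G R → (∀ n, R n ∉ D) →
      RayEquivAvoid G D R R₀ → RayEquiv G R ω₀ := by
    intro R _ _ hRA S hS
    obtain ⟨m, n, p, hp⟩ := hRA S hS
    exact ⟨m, n + N, p, fun v hv hvS => hp v hv (Or.inl hvS)⟩
  have nodom : ∀ d, ¬ DominatesAvoid G D R₀ d := by
    rintro d ⟨hdD, hdom⟩
    refine hdD ?_
    show Dominates G ω₀ d
    intro S hS hdS
    obtain ⟨n, p, hp⟩ := hdom S hS hdS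
    exact ⟨n + N, p, fun v hv hvS => hp v hv (Or.inl hvS)⟩
  have hdomeq : D = {d | DominatesAvoid G D R₀ d} ∪ (D ∩ D) := by
    ext d
    simp only [Set.mem_union, Set.mem_inter_iff, Set.mem_setOf_eq, and_self]
    exact ⟨fun h => Or.inr h, fun h => h.elim (fun h' => absurd h' (nodom d)) id⟩
  -- degree equality
  have hbdd1 : BddAbove (Set.range fun s : {s : Set (ℕ → V) //
      (∀ R ∈ s, OmegaRay G ω₀ R) ∧
      s.Pairwise fun R R' => Disjoint (Set.range R) (Set.range R')} =>
        Cardinal.mk s.1) := by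
    refine ⟨Cardinal.mk (ℕ → V), ?_⟩
    rintro x ⟨s, rfl⟩
    exact Cardinal.mk_set_le _
  have hbdd2 : BddAbove (Set.range fun s : {s : Set (ℕ → V) //
      (∀ R ∈ s, IsRay G R ∧ (∀ n, R n ∉ D) ∧ RayEquivAvoid G D R R₀) ∧
      s.Pairwise fun R R' => Disjoint (Set.range R) (Set.range R')} =>
        Cardinal.mk s.1) := by
    refine ⟨Cardinal.mk (ℕ → V), ?_⟩
    rintro x ⟨s, rfl⟩
    exact Cardinal.mk_set_le _
  haveI hne1 : Nonempty {s : Set (ℕ → V) //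
      (∀ R ∈ s, OmegaRay G ω₀ R) ∧
      s.Pairwise fun R R' => Disjoint (Set.range R) (Set.range R')} :=
    ⟨⟨∅, fun R h => (Set.notMem_empty R h).elim, Set.pairwise_empty _⟩⟩
  haveI hne2 : Nonempty {s : Set (ℕ → V) //
      (∀ R ∈ s, IsRay G R ∧ (∀ n, R n ∉ D) ∧ RayEquivAvoid G D R R₀) ∧
      s.Pairwise fun R R' => Disjoint (Set.range R) (Set.range R')} :=
    ⟨⟨∅, fun R h => (Set.notMem_empty R h).elim, Set.pairwise_empty _⟩⟩
  have hdeg : endDegree G ω₀ = endDegreeAvoid G D R₀ := by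
    unfold endDegree endDegreeAvoid
    apply le_antisymm
    · refine ciSup_le fun s => ?_
      obtain ⟨s, hs1, hs2⟩ := s
      have hsub : ∀ R : ℕ → V, Set.range (tailRay D R) ⊆ Set.range R := by
        rintro R _ ⟨n, rfl⟩
        exact ⟨n + shiftIdx D R, rfl⟩
      have hinjOn : Set.InjOn (tailRay D) s := by
        intro R hR Q hQ h
        by_contra hne
        have hdisj := hs2 hR hQ hne
        have h1 : tailRay D R 0 ∈ Set.range R := hsub R ⟨0, rfl⟩
        have h2 : tailRay D R 0 ∈ Set.range Q := by
          rw [h]; exact hsub Q ⟨0, rfl⟩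
        exact Set.disjoint_left.mp hdisj h1 h2
      have hcond : ∀ R' ∈ tailRay D '' s,
          IsRay G R' ∧ (∀ n, R' n ∉ D) ∧ RayEquivAvoid G D R' R₀ := by
        rintro _ ⟨R, hR, rfl⟩
        obtain ⟨⟨hinjR, hadjR⟩, heq⟩ := hs1 R hR
        refine ⟨⟨?_, ?_⟩, fun n => shiftIdx_spec hfin hinjR _ (Nat.le_add_left _ _), ?_⟩
        · intro a b h
          have := hinjR h
          omega
        · intro n
          have h : n + 1 + shiftIdx D R = n + shiftIdx D R + 1 := by omega
          show G.Adj (R (n + shiftIdx D R)) (R (n + 1 + shiftIdx D R))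
          rw [h]
          exact hadjR (n + shiftIdx D R)
        · intro S hS
          obtain ⟨m, n, p, hp⟩ := key R (shiftIdx D R) heq S hS
          exact ⟨m, n, p, hp⟩
      have hpair : (tailRay D '' s).Pairwise
          fun R R' => Disjoint (Set.range R) (Set.range R') := by
        rintro _ ⟨R, hR, rfl⟩ _ ⟨Q, hQ, rfl⟩ hneq
        have hRQ : R ≠ Q := fun h => hneq (by rw [h])
        exact (hs2 hR hQ hRQ).mono (hsub R) (hsub Q)
      have hcard : Cardinal.mk s = Cardinal.mk ↥(tailRay D '' s) :=
        (Cardinal.mk_image_eq_of_injOn _ _ hinjOn).symm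
      calc Cardinal.mk ↥s = Cardinal.mk ↥(tailRay D '' s) := hcard
        _ ≤ _ := le_ciSup hbdd2 ⟨tailRay D '' s, hcond, hpair⟩
    · refine ciSup_le fun s => ?_
      obtain ⟨s, hs1, hs2⟩ := s
      exact le_ciSup hbdd1 ⟨s, fun R hR =>
        ⟨(hs1 R hR).1, claim2 R (hs1 R hR).1 (hs1 R hR).2.1 (hs1 R hR).2.2⟩, hs2⟩
  exact ⟨R₀, ⟨hR₀ray, hR₀equiv⟩, havoid, claim1, claim2, hdeg, hdomeq, nodom⟩
end
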